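/- arXiv:1508.06847 — 5 statements merged into one kernel-verified Lean document; each statement's English description precedes it below -/
import Mathlib

section
/- If S is a percolating set of a graph G under 2-neighbor bootstrap percolation and v is a vertex with t(G,S,v) = k, then there exists a path v_0, v_1, ..., v_k = v in G such that t(G,S,v_i) = i for each 0 ≤ i ≤ k. -/
open SimpleGraph

/-- One round of 2-neighbor bootstrap percolation: add every vertex with
at least two (distinct) infected neighbors. -/
def infectStep {V : Type} (G : SimpleGraph V) (S : Set V) : Set V :=
  S ∪ {v | ∃ u w, u ≠ w ∧ G.Adj v u ∧ G.Adj v w ∧ u ∈ S ∧ w ∈ S}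

/-- The infected set after `n` rounds starting from `S`. -/
def stage {V : Type} (G : SimpleGraph V) (S : Set V) : ℕ → Set V
  | 0 => S
  | n + 1 => infectStep G (stage G S n)

/-- `S` percolates: eventually every vertex is infected. -/
def Percolates {V : Type} (G : SimpleGraph V) (S : Set V) : Prop :=
  ∃ t, stage G S t = Set.univ

/-- The infection time of `v` (`⊤` if `v` is never infected). -/
noncomputable def infTime {V : Type} (G : SimpleGraph V) (S : Set V) (v : V) : ℕ∞ :=
  sInf {n : ℕ∞ | ∃ i : ℕ, n = (i : ℕ∞) ∧ v ∈ stage G S i}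

/-- The percolation time of a percolating set `S`. -/
noncomputable def percTime {V : Type} (G : SimpleGraph V) (S : Set V) : ℕ :=
  sInf {t | stage G S t = Set.univ}

/-- The maximum percolation time `t(G)`. -/
noncomputable def maxTime {V : Type} (G : SimpleGraph V) : ℕ :=
  sSup {t | ∃ S : Set V, Percolates G S ∧ percTime G S = t}

/-- `w` lists the vertices of an induced (chordless) path in `G`. -/
def IsInducedPath {V : Type} (G : SimpleGraph V) {n : ℕ} (w : Fin (n + 1) → V) : Prop :=
  Function.Injective w ∧
    ∀ i j : Fin (n + 1), G.Adj (w i) (w j) ↔ (i.1 + 1 = j.1 ∨ j.1 + 1 = i.1)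


lemma stage_mono {V : Type} (G : SimpleGraph V) (S : Set V) {m n : ℕ} (h : m ≤ n) :
    stage G S m ⊆ stage G S n := by
  induction n with
  | zero => simp_all
  | succ n ih =>
    rcases Nat.lt_or_ge m (n+1) with h' | h'
    · exact (ih (Nat.lt_succ_iff.mp h')).trans (fun x hx => Or.inl hx)
    · have : m = n + 1 := le_antisymm h h'
      subst this; exact fun x hx => hx

lemma infTime_eq_coe {V : Type} (G : SimpleGraph V) (S : Set V) {v : V} {T : Set ℕ}
    (hT : T = {i : ℕ | v ∈ stage G S i}) (hne : T.Nonempty) :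
    infTime G S v = ((sInf T : ℕ) : ℕ∞) := by
  rw [infTime, ENat.coe_sInf hne]
  have : {n : ℕ∞ | ∃ i : ℕ, n = (i : ℕ∞) ∧ v ∈ stage G S i} = (fun i : ℕ => (i : ℕ∞)) '' T := by
    ext n; simp only [hT, Set.mem_image, Set.mem_setOf_eq]; tauto
  rw [this, sInf_image]

lemma infTime_eq_iff {V : Type} (G : SimpleGraph V) (S : Set V) {v : V} {k : ℕ} :
    infTime G S v = (k : ℕ∞) ↔ v ∈ stage G S k ∧ ∀ j < k, v ∉ stage G S j := by
  constructor
  · intro h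
    have hne : ({i : ℕ | v ∈ stage G S i} : Set ℕ).Nonempty := by
      by_contra hemp
      rw [Set.not_nonempty_iff_eq_empty] at hemp
      have : {n : ℕ∞ | ∃ i : ℕ, n = (i : ℕ∞) ∧ v ∈ stage G S i} = ∅ := by
        ext n; simp only [Set.mem_setOf_eq, Set.mem_empty_iff_false, iff_false]
        rintro ⟨i, _, hi⟩
        exact absurd hi (by simpa using Set.eq_empty_iff_forall_notMem.mp hemp i)
      rw [infTime, this, sInf_empty] at h
      exact (ENat.coe_ne_top k) h.symm
    rw [infTime_eq_coe G S rfl hne, Nat.cast_inj] at h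
    constructor
    · have := Nat.sInf_mem hne; rw [h] at this; exact this
    · intro j hj hjmem
      have := Nat.sInf_le (s := {i : ℕ | v ∈ stage G S i}) hjmem
      omega
  · rintro ⟨hk, hlt⟩
    have hne : ({i : ℕ | v ∈ stage G S i} : Set ℕ).Nonempty := ⟨k, hk⟩
    rw [infTime_eq_coe G S rfl hne, Nat.cast_inj]
    refine le_antisymm (Nat.sInf_le hk) ?_
    by_contra hcon
    push_neg at hcon
    exact hlt _ hcon (Nat.sInf_mem hne)

lemma exists_nbr {V : Type} (G : SimpleGraph V) (S : Set V) {v : V} {k : ℕ}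
    (hk : v ∈ stage G S (k+1)) (hnk : v ∉ stage G S k) :
    ∃ u, G.Adj v u ∧ infTime G S u = (k : ℕ∞) := by
  have : v ∈ infectStep G (stage G S k) := hk
  rcases this with h | ⟨u, w, huw, hau, haw, hu, hw⟩
  · exact absurd h hnk
  by_contra hcon
  push_neg at hcon
  have key : ∀ x, x ∈ stage G S k → infTime G S x ≠ (k : ℕ∞) → k ≠ 0 ∧ x ∈ stage G S (k-1) := by
    intro x hx hne
    rw [Ne, infTime_eq_iff] at hne
    push_neg at hne
    rcases hne hx with ⟨j, hj, hmem⟩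
    exact ⟨by omega, stage_mono G S (by omega) hmem⟩
  have ⟨hk0, hu'⟩ := key u hu (fun h => hcon u hau h)
  have ⟨_, hw'⟩ := key w hw (fun h => hcon w haw h)
  apply hnk
  have : k = (k-1) + 1 := by omega
  rw [this]
  exact Or.inr ⟨u, w, huw, hau, haw, hu', hw'⟩

lemma stmt0_aux {V : Type} (G : SimpleGraph V) (S : Set V) :
    ∀ (k : ℕ) (v : V), infTime G S v = (k : ℕ∞) →
    ∃ w : Fin (k + 1) → V, w (Fin.last k) = v ∧
      (∀ i : Fin k, G.Adj (w i.castSucc) (w i.succ)) ∧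
      ∀ i : Fin (k + 1), infTime G S (w i) = (i.1 : ℕ∞) := by
  intro k
  induction k with
  | zero =>
    intro v hv
    refine ⟨fun _ => v, rfl, fun i => i.elim0, fun i => ?_⟩
    have : i = 0 := Fin.ext (by omega)
    subst this; simpa using hv
  | succ k ih =>
    intro v hv
    rw [infTime_eq_iff] at hv
    obtain ⟨hmem, hnot⟩ := hv
    obtain ⟨u, hadj, hu⟩ := exists_nbr G S hmem (hnot k (by omega))
    obtain ⟨w, hlast, hadjw, htime⟩ := ih u hu
    refine ⟨Fin.snoc w v, Fin.snoc_last _ _, ?_, ?_⟩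
    · intro i
      refine Fin.lastCases ?_ ?_ i
      · have h2 : (Fin.last k).succ = Fin.last (k+1) := rfl
        rw [h2, Fin.snoc_last, Fin.snoc_castSucc, hlast]
        exact hadj.symm
      · intro j
        have h1 : (j.castSucc).succ = (j.succ).castSucc := (Fin.succ_castSucc j).symm
        rw [h1, Fin.snoc_castSucc, Fin.snoc_castSucc]
        exact hadjw j
    · intro i
      refine Fin.lastCases ?_ ?_ i
      · rw [Fin.snoc_last]
        exact infTime_eq_iff G S |>.mpr ⟨hmem, hnot⟩
      · intro j
        rw [Fin.snoc_castSucc]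
        simpa using htime j

theorem stmt0 {V : Type} (G : SimpleGraph V) (S : Set V) (v : V) (k : ℕ)
    (hperc : Percolates G S) (hv : infTime G S v = (k : ℕ∞)) :
    ∃ w : Fin (k + 1) → V, w (Fin.last k) = v ∧ Function.Injective w ∧
      (∀ i : Fin k, G.Adj (w i.castSucc) (w i.succ)) ∧
      ∀ i : Fin (k + 1), infTime G S (w i) = (i.1 : ℕ∞) := by
  obtain ⟨w, hlast, hadj, htime⟩ := stmt0_aux G S k v hv
  refine ⟨w, hlast, ?_, hadj, htime⟩
  intro i j hij
  have : (i.1 : ℕ∞) = (j.1 : ℕ∞) := by rw [← htime i, ← htime j, hij]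
  exact Fin.ext (by exact_mod_cast this)
end

section
/- Let G be a connected graph with maximum degree 3 and k a non-negative integer. Then t(G) ≥ k if and only if G has an induced path P such that either (a) all vertices of P have degree 3 in G and P has at least 2k-2 edges, or (b) all vertices of P have degree 3 in G except one endpoint which has degree 2, and P has at least k-1 edges. -/
open SimpleGraph

set_option linter.unusedSectionVars false
set_option linter.unusedVariables false

section Basic
variable {V : Type} (G : SimpleGraph V) (S : Set V)

lemma subset_infectStep : S ⊆ infectStep G S := Set.subset_union_left

lemma stage_succ (t : ℕ) : stage G S (t + 1) = infectStep G (stage G S t) := rfl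

lemma stage_mono_succ (t : ℕ) : stage G S t ⊆ stage G S (t + 1) :=
  subset_infectStep _ _

lemma stage_mono_s2 {s t : ℕ} (h : s ≤ t) : stage G S s ⊆ stage G S t := by
  induction t with
  | zero => simp_all
  | succ n ih =>
    rcases Nat.lt_or_ge s (n+1) with h' | h'
    · exact (ih (Nat.lt_succ_iff.mp h')).trans (stage_mono_succ G S n)
    · have : s = n + 1 := le_antisymm h h'
      subst this; rfl

lemma mem_stage_succ {v : V} {t : ℕ} :
    v ∈ stage G S (t + 1) ↔ v ∈ stage G S t ∨
      ∃ a b, a ≠ b ∧ G.Adj v a ∧ G.Adj v b ∧ a ∈ stage G S t ∧ b ∈ stage G S t := Iff.rfl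

end Basic

section Helpers
variable {V : Type} [Fintype V] [DecidableEq V] (G : SimpleGraph V) [DecidableRel G.Adj]

omit [DecidableEq V] in
lemma deg_eq (v : V) : (G.neighborFinset v).card = G.degree v := rfl

lemma helper_pin3 {v x y z : V} (h3 : G.degree v ≤ 3) (hxy : x ≠ y) (hxz : x ≠ z) (hyz : y ≠ z)
    (hx : G.Adj v x) (hy : G.Adj v y) (hz : G.Adj v z) :
    ∀ u, G.Adj v u → u = x ∨ u = y ∨ u = z := by
  intro u hu
  by_contra hcon
  push_neg at hcon
  obtain ⟨h1, h2, h3'⟩ := hcon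
  have hsub : ({u, x, y, z} : Finset V) ⊆ G.neighborFinset v := by
    intro a ha
    simp only [Finset.mem_insert, Finset.mem_singleton] at ha
    rcases ha with rfl | rfl | rfl | rfl <;> simp [mem_neighborFinset, *]
  have hcard : ({u, x, y, z} : Finset V).card = 4 := by
    rw [Finset.card_insert_of_notMem (by simp [h1, h2, h3']),
        Finset.card_insert_of_notMem (by simp [hxy, hxz]),
        Finset.card_insert_of_notMem (by simp [hyz])]
    simp
  have := Finset.card_le_card hsub
  rw [hcard, deg_eq] at this
  omega

lemma helper_pin2 {v x y : V} (h2 : G.degree v ≤ 2) (hxy : x ≠ y)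
    (hx : G.Adj v x) (hy : G.Adj v y) :
    ∀ u, G.Adj v u → u = x ∨ u = y := by
  intro u hu
  by_contra hcon
  push_neg at hcon
  obtain ⟨h1, h1'⟩ := hcon
  have hsub : ({u, x, y} : Finset V) ⊆ G.neighborFinset v := by
    intro a ha
    simp only [Finset.mem_insert, Finset.mem_singleton] at ha
    rcases ha with rfl | rfl | rfl <;> simp [mem_neighborFinset, *]
  have hcard : ({u, x, y} : Finset V).card = 3 := by
    rw [Finset.card_insert_of_notMem (by simp [h1, h1']),
        Finset.card_insert_of_notMem (by simp [hxy])]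
    simp
  have := Finset.card_le_card hsub
  rw [hcard, deg_eq] at this
  omega

lemma helper_deg3 {v x y z : V} (hmax : G.degree v ≤ 3) (hxy : x ≠ y) (hxz : x ≠ z) (hyz : y ≠ z)
    (hx : G.Adj v x) (hy : G.Adj v y) (hz : G.Adj v z) : G.degree v = 3 := by
  have hsub : ({x, y, z} : Finset V) ⊆ G.neighborFinset v := by
    intro a ha
    simp only [Finset.mem_insert, Finset.mem_singleton] at ha
    rcases ha with rfl | rfl | rfl <;> simp [mem_neighborFinset, *]
  have hcard : ({x, y, z} : Finset V).card = 3 := by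
    rw [Finset.card_insert_of_notMem (by simp [hxy, hxz]),
        Finset.card_insert_of_notMem (by simp [hyz])]
    simp
  have := Finset.card_le_card hsub
  rw [hcard, deg_eq] at this
  omega

lemma helper_ex3 {v x : V} (hdeg : G.degree v = 3) (hx : G.Adj v x) :
    ∃ y z, y ≠ z ∧ y ≠ x ∧ z ≠ x ∧ G.Adj v y ∧ G.Adj v z := by
  have hxm : x ∈ G.neighborFinset v := by simp [mem_neighborFinset, hx]
  have hcard : (G.neighborFinset v \ {x}).card = 2 := by
    rw [Finset.card_sdiff_of_subset (by simpa using hxm), deg_eq, hdeg]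
    rfl
  obtain ⟨y, z, hyz, hmem⟩ : ∃ y z, y ≠ z ∧ {y, z} ⊆ G.neighborFinset v \ {x} := by
    rw [Finset.card_eq_two] at hcard
    obtain ⟨y, z, hyz, h⟩ := hcard
    exact ⟨y, z, hyz, by rw [h]⟩
  have hy := hmem (by simp : y ∈ ({y, z} : Finset V))
  have hz := hmem (by simp : z ∈ ({y, z} : Finset V))
  simp only [Finset.mem_sdiff, mem_neighborFinset, Finset.mem_singleton] at hy hz
  exact ⟨y, z, hyz, hy.2, hz.2, hy.1, hz.1⟩

lemma helper_ex3' {v x y : V} (hdeg : G.degree v = 3) (hxy : x ≠ y) (hx : G.Adj v x) (hy : G.Adj v y) :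
    ∃ z, z ≠ x ∧ z ≠ y ∧ G.Adj v z := by
  have hsub : ({x, y} : Finset V) ⊆ G.neighborFinset v := by
    intro a ha
    simp only [Finset.mem_insert, Finset.mem_singleton] at ha
    rcases ha with rfl | rfl <;> simp [mem_neighborFinset, hx, hy]
  have hcard : (G.neighborFinset v \ {x, y}).card = 1 := by
    rw [Finset.card_sdiff_of_subset hsub]
    rw [Finset.card_insert_of_notMem (by simp [hxy]), Finset.card_singleton, deg_eq, hdeg]
  obtain ⟨z, hz⟩ := Finset.card_eq_one.mp hcard
  have := hz ▸ Finset.mem_singleton_self z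
  simp only [Finset.mem_sdiff, mem_neighborFinset, Finset.mem_insert, Finset.mem_singleton] at this
  push_neg at this
  exact ⟨z, this.2.1, this.2.2, this.1⟩

lemma helper_ex2 {v x : V} (hdeg : G.degree v = 2) (hx : G.Adj v x) :
    ∃ z, z ≠ x ∧ G.Adj v z := by
  have hcard : (G.neighborFinset v \ {x}).card = 1 := by
    rw [Finset.card_sdiff_of_subset (by simp [mem_neighborFinset, hx]), deg_eq, hdeg]
    rfl
  obtain ⟨z, hz⟩ := Finset.card_eq_one.mp hcard
  have := hz ▸ Finset.mem_singleton_self z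
  simp only [Finset.mem_sdiff, mem_neighborFinset, Finset.mem_singleton] at this
  exact ⟨z, this.2, this.1⟩

end Helpers

set_option linter.unusedSectionVars false
section Perc
variable {V : Type} [Fintype V] (G : SimpleGraph V) (S : Set V)

lemma stage_fixed {t : ℕ} (h : stage G S (t + 1) = stage G S t) :
    ∀ s, t ≤ s → stage G S s = stage G S t := by
  intro s hs
  induction s with
  | zero =>
    have : t = 0 := Nat.le_zero.mp hs
    rw [this]
  | succ n ih =>
    rcases Nat.lt_or_ge t (n+1) with h' | h'
    · have hn : t ≤ n := Nat.lt_succ_iff.mp h'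
      have := ih hn
      rw [stage_succ, this, ← stage_succ, h]
    · have : t = n + 1 := le_antisymm hs h'
      rw [this]

lemma stage_card_lemma (hP : Percolates G S) :
    ∀ m : ℕ, stage G S m = Set.univ ∨ m ≤ (stage G S m).ncard := by
  intro m
  induction m with
  | zero => right; omega
  | succ n ih =>
    by_cases hu : stage G S (n+1) = Set.univ
    · left; exact hu
    · right
      have hn : stage G S n ≠ Set.univ := by
        intro h
        exact hu (Set.eq_univ_of_univ_subset (h ▸ stage_mono_succ G S n))
      have hne : stage G S (n+1) ≠ stage G S n := by
        intro h
        obtain ⟨t, ht⟩ := hP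
        rcases Nat.lt_or_ge t n with h' | h'
        · exact hn (Set.eq_univ_of_univ_subset (ht ▸ stage_mono_s2 G S h'.le))
        · exact hn ((stage_fixed G S h t h') ▸ ht)
      have hss : stage G S n ⊂ stage G S (n+1) :=
        (stage_mono_succ G S n).ssubset_of_ne (fun h => hne h.symm)
      have hlt : (stage G S n).ncard < (stage G S (n+1)).ncard :=
        Set.ncard_lt_ncard hss (Set.toFinite _)
      rcases ih with h | h
      · exact absurd h hn
      · omega

lemma stage_card_univ (hP : Percolates G S) : stage G S (Fintype.card V) = Set.univ := by
  rcases stage_card_lemma G S hP (Fintype.card V) with h | h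
  · exact h
  · by_contra hne
    have hss : stage G S (Fintype.card V) ⊂ Set.univ :=
      (Set.subset_univ _).ssubset_of_ne hne
    have := Set.ncard_lt_ncard hss (Set.toFinite _)
    rw [Set.ncard_univ, Nat.card_eq_fintype_card] at this
    omega

lemma percTime_le_card (hP : Percolates G S) : percTime G S ≤ Fintype.card V :=
  Nat.sInf_le (stage_card_univ G S hP)

lemma percTime_stage (hP : Percolates G S) : stage G S (percTime G S) = Set.univ :=
  Nat.sInf_mem hP

lemma lt_percTime_of_ne (hP : Percolates G S) {t : ℕ} (h : stage G S t ≠ Set.univ) :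
    t < percTime G S := by
  by_contra hle
  push_neg at hle
  have := stage_mono_s2 G S hle
  rw [percTime_stage G S hP] at this
  exact h (Set.eq_univ_of_univ_subset this)

lemma le_maxTime (hP : Percolates G S) : percTime G S ≤ maxTime G := by
  apply le_csSup
  · exact ⟨Fintype.card V, fun x ⟨S', hS', hx⟩ => hx ▸ percTime_le_card G S' hS'⟩
  · exact ⟨S, hP, rfl⟩

end Perc

section Backward
variable {V : Type} [Fintype V] [DecidableEq V] (G : SimpleGraph V) [DecidableRel G.Adj]

variable {n : ℕ} (w : Fin (n+1) → V)

/-- The target infected set at time `t`, for schedule `due`. -/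
def sdue (due : Fin (n+1) → ℕ) (t : ℕ) : Set V :=
  (Set.range w)ᶜ ∪ w '' {i | due i ≤ t}

lemma sdue_mono (due : Fin (n+1) → ℕ) {s t : ℕ} (h : s ≤ t) :
    sdue w due s ⊆ sdue w due t := by
  apply Set.union_subset_union_right
  apply Set.image_mono
  intro i hi
  exact le_trans hi h

lemma stage_formula (hw : Function.Injective w) (due : Fin (n+1) → ℕ)
    (h1 : ∀ i, 1 ≤ due i)
    (hstep : ∀ (i : Fin (n+1)) (t : ℕ), due i = t + 1 →
      ∃ a b, a ≠ b ∧ G.Adj (w i) a ∧ G.Adj (w i) b ∧ a ∈ sdue w due t ∧ b ∈ sdue w due t)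
    (hblock : ∀ (i : Fin (n+1)) (t : ℕ), t + 1 < due i →
      ∀ a b, a ≠ b → G.Adj (w i) a → G.Adj (w i) b →
        a ∈ sdue w due t → b ∈ sdue w due t → False) :
    ∀ t, stage G (Set.range w)ᶜ t = sdue w due t := by
  intro t
  induction t with
  | zero =>
    show (Set.range w)ᶜ = _
    unfold sdue
    have : {i : Fin (n+1) | due i ≤ 0} = ∅ := by
      ext i; simp only [Set.mem_setOf_eq, Set.mem_empty_iff_false, iff_false]
      have := h1 i; omega
    rw [this]
    simp
  | succ t ih =>
    rw [stage_succ, ih]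
    apply Set.Subset.antisymm
    · rintro v (hv | ⟨a, b, hab, ha, hb, haS, hbS⟩)
      · exact sdue_mono w due (Nat.le_succ t) hv
      · by_cases hvS : v ∈ (Set.range w)ᶜ
        · exact Or.inl hvS
        · have : v ∈ Set.range w := not_not.mp hvS
          obtain ⟨i, rfl⟩ := this
          rcases Nat.lt_or_ge (t+1) (due i) with hlt | hle
          · exact absurd (hblock i t hlt a b hab ha hb haS hbS) not_false
          · exact Or.inr ⟨i, hle, rfl⟩
    · rintro v (hv | ⟨i, hi, rfl⟩)
      · exact subset_infectStep G _ (Or.inl hv)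
      · simp only [Set.mem_setOf_eq] at hi
        rcases Nat.lt_or_ge (due i) (t+1) with hlt | hge
        · exact subset_infectStep G _ (Or.inr ⟨i, Nat.lt_succ_iff.mp hlt, rfl⟩)
        · have hdue : due i = t + 1 := le_antisymm hi hge
          obtain ⟨a, b, hab, ha, hb, haS, hbS⟩ := hstep i t hdue
          exact Or.inr ⟨a, b, hab, ha, hb, haS, hbS⟩

lemma backward_main (hw : Function.Injective w) (due : Fin (n+1) → ℕ)
    (h1 : ∀ i, 1 ≤ due i)
    (hstep : ∀ (i : Fin (n+1)) (t : ℕ), due i = t + 1 →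
      ∃ a b, a ≠ b ∧ G.Adj (w i) a ∧ G.Adj (w i) b ∧ a ∈ sdue w due t ∧ b ∈ sdue w due t)
    (hblock : ∀ (i : Fin (n+1)) (t : ℕ), t + 1 < due i →
      ∀ a b, a ≠ b → G.Adj (w i) a → G.Adj (w i) b →
        a ∈ sdue w due t → b ∈ sdue w due t → False)
    (M : ℕ) (hM : ∀ i, due i ≤ M) (i0 : Fin (n+1)) (hi0 : due i0 = M) (hMpos : 1 ≤ M) :
    Percolates G (Set.range w)ᶜ ∧ M ≤ percTime G (Set.range w)ᶜ := by
  have hform := stage_formula G w hw due h1 hstep hblock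
  have hperc : Percolates G (Set.range w)ᶜ := by
    refine ⟨M, ?_⟩
    rw [hform M]
    apply Set.eq_univ_of_forall
    intro v
    by_cases hv : v ∈ Set.range w
    · obtain ⟨i, rfl⟩ := hv
      exact Or.inr ⟨i, hM i, rfl⟩
    · exact Or.inl hv
  refine ⟨hperc, ?_⟩
  have hne : stage G (Set.range w)ᶜ (M-1) ≠ Set.univ := by
    rw [hform (M-1)]
    intro hcon
    have : w i0 ∈ sdue w due (M-1) := hcon ▸ Set.mem_univ _
    rcases this with h | ⟨j, hj, hji⟩
    · exact h (Set.mem_range_self i0)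
    · have := hw hji
      subst this
      simp only [Set.mem_setOf_eq] at hj
      omega
  have := lt_percTime_of_ne G _ hperc hne
  omega

end Backward

section BackCases
variable {V : Type} [Fintype V] [DecidableEq V] (G : SimpleGraph V) [DecidableRel G.Adj]
variable {n : ℕ} (w : Fin (n+1) → V)

lemma helper_ex_one {v : V} (hdeg : 1 ≤ G.degree v) : ∃ x, G.Adj v x := by
  have : (G.neighborFinset v).Nonempty := Finset.card_pos.mp (by rw [deg_eq]; omega)
  obtain ⟨x, hx⟩ := this
  exact ⟨x, (mem_neighborFinset G v x).mp hx⟩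

lemma mem_S_of (hpath : IsInducedPath G w) {i : Fin (n+1)} {z : V} (hz : G.Adj (w i) z)
    (h1 : ∀ _ : 1 ≤ i.1, z ≠ w ⟨i.1 - 1, by omega⟩)
    (h2 : ∀ _ : i.1 + 1 ≤ n, z ≠ w ⟨i.1 + 1, by omega⟩) : z ∉ Set.range w := by
  rintro ⟨j, rfl⟩
  rcases (hpath.2 i j).mp hz with h | h
  · have hj : j.1 ≤ n := by omega
    have : i.1 + 1 ≤ n := by omega
    exact h2 this (by congr 1; exact Fin.ext h.symm)
  · have hi1 : 1 ≤ i.1 := by omega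
    apply h1 hi1
    congr 1
    apply Fin.ext
    show j.1 = i.1 - 1
    omega

lemma adj_succ (hpath : IsInducedPath G w) {i : Fin (n+1)} (h : i.1 + 1 ≤ n) :
    G.Adj (w i) (w ⟨i.1 + 1, by omega⟩) :=
  (hpath.2 i ⟨i.1 + 1, by omega⟩).mpr (Or.inl rfl)

lemma adj_pred (hpath : IsInducedPath G w) {i : Fin (n+1)} (h : 1 ≤ i.1) :
    G.Adj (w i) (w ⟨i.1 - 1, by omega⟩) :=
  (hpath.2 i ⟨i.1 - 1, by omega⟩).mpr (Or.inr (by simp; omega))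

/-- From an endpoint-style vertex of degree 3 with at most one path-neighbor,
get two distinct off-path infected-at-0 neighbors. -/
lemma two_seeds_deg3_left (hpath : IsInducedPath G w) {i : Fin (n+1)}
    (hi : i.1 = 0) (hdeg : G.degree (w i) = 3) (due : Fin (n+1) → ℕ) (t : ℕ) :
    ∃ a b, a ≠ b ∧ G.Adj (w i) a ∧ G.Adj (w i) b ∧
      a ∈ sdue w due t ∧ b ∈ sdue w due t := by
  by_cases hn : n = 0
  · obtain ⟨x, hx⟩ := helper_ex_one G (by omega : 1 ≤ G.degree (w i))
    obtain ⟨y, z, hyz, _, _, hy, hz⟩ := helper_ex3 G hdeg hx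
    have hyS : y ∉ Set.range w := mem_S_of G w hpath hy
      (fun h _ => by omega) (fun h _ => by omega)
    have hzS : z ∉ Set.range w := mem_S_of G w hpath hz
      (fun h _ => by omega) (fun h _ => by omega)
    exact ⟨y, z, hyz, hy, hz, Or.inl hyS, Or.inl hzS⟩
  · have hadj1 : G.Adj (w i) (w ⟨i.1 + 1, by omega⟩) := adj_succ G w hpath (by omega)
    obtain ⟨y, z, hyz, hy1, hz1, hy, hz⟩ := helper_ex3 G hdeg hadj1
    have hyS : y ∉ Set.range w := mem_S_of G w hpath hy
      (fun h => by omega) (fun h => by simpa [hi] using hy1)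
    have hzS : z ∉ Set.range w := mem_S_of G w hpath hz
      (fun h => by omega) (fun h => by simpa [hi] using hz1)
    exact ⟨y, z, hyz, hy, hz, Or.inl hyS, Or.inl hzS⟩

lemma two_seeds_deg3_right (hpath : IsInducedPath G w) {i : Fin (n+1)}
    (hi : i.1 = n) (hn : 1 ≤ n) (hdeg : G.degree (w i) = 3) (due : Fin (n+1) → ℕ) (t : ℕ) :
    ∃ a b, a ≠ b ∧ G.Adj (w i) a ∧ G.Adj (w i) b ∧
      a ∈ sdue w due t ∧ b ∈ sdue w due t := by
  have hadj1 : G.Adj (w i) (w ⟨i.1 - 1, by omega⟩) := adj_pred G w hpath (by omega)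
  obtain ⟨y, z, hyz, hy1, hz1, hy, hz⟩ := helper_ex3 G hdeg hadj1
  have hyS : y ∉ Set.range w := mem_S_of G w hpath hy
    (fun h => hy1) (fun h => by omega)
  have hzS : z ∉ Set.range w := mem_S_of G w hpath hz
    (fun h => hz1) (fun h => by omega)
  exact ⟨y, z, hyz, hy, hz, Or.inl hyS, Or.inl hzS⟩

/-- unique off-path neighbor for an internal degree-3 vertex -/
lemma third_nbr (hpath : IsInducedPath G w) {i : Fin (n+1)}
    (h1 : 1 ≤ i.1) (h2 : i.1 + 1 ≤ n) (hdeg : G.degree (w i) = 3) :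
    ∃ z, z ≠ w ⟨i.1 - 1, by omega⟩ ∧ z ≠ w ⟨i.1 + 1, by omega⟩ ∧
      G.Adj (w i) z ∧ z ∉ Set.range w := by
  have hprev := adj_pred G w hpath h1
  have hnext := adj_succ G w hpath h2
  have hne : w ⟨i.1 - 1, by omega⟩ ≠ w ⟨i.1 + 1, by omega⟩ := by
    intro h
    have h2 : i.1 - 1 = i.1 + 1 := Fin.val_eq_of_eq (hpath.1 h)
    omega
  obtain ⟨z, hz1, hz2, hz⟩ := helper_ex3' G hdeg hne hprev hnext
  exact ⟨z, hz1, hz2, hz, mem_S_of G w hpath hz (fun _ => hz1) (fun _ => hz2)⟩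

end BackCases

section BackFinish
variable {V : Type} [Fintype V] [DecidableEq V] (G : SimpleGraph V) [DecidableRel G.Adj]
variable {n : ℕ} (w : Fin (n+1) → V)

lemma not_seed_path (j : Fin (n+1)) : w j ∉ (Set.range w)ᶜ := by
  simp [Set.mem_range_self]

lemma backward_a (hmax : ∀ v, G.degree v ≤ 3) (hpath : IsInducedPath G w)
    (hdeg : ∀ i, G.degree (w i) = 3) :
    Percolates G (Set.range w)ᶜ ∧ n / 2 + 1 ≤ percTime G (Set.range w)ᶜ := by
  set due : Fin (n+1) → ℕ := fun i => min i.1 (n - i.1) + 1 with hdue_def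
  have h1 : ∀ i, 1 ≤ due i := fun i => by simp [hdue_def]
  have hstep : ∀ (i : Fin (n+1)) (t : ℕ), due i = t + 1 →
      ∃ a b, a ≠ b ∧ G.Adj (w i) a ∧ G.Adj (w i) b ∧
        a ∈ sdue w due t ∧ b ∈ sdue w due t := by
    intro i t hd
    have hmin : min i.1 (n - i.1) = t := by simpa [hdue_def] using hd
    rcases Nat.eq_zero_or_pos t with rfl | htpos
    · -- endpoint
      rcases (by omega : i.1 = 0 ∨ i.1 = n) with h | h
      · exact two_seeds_deg3_left G w hpath h (hdeg i) due 0
      · rcases Nat.eq_zero_or_pos n with rfl | hn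
        · exact two_seeds_deg3_left G w hpath (by omega) (hdeg i) due 0
        · exact two_seeds_deg3_right G w hpath h hn (hdeg i) due 0
    · -- internal
      have hl : 1 ≤ i.1 := by omega
      have hr : i.1 + 1 ≤ n := by omega
      obtain ⟨z, hz1, hz2, hz, hzS⟩ := third_nbr G w hpath hl hr (hdeg i)
      rcases le_or_gt i.1 (n - i.1) with hside | hside
      · refine ⟨w ⟨i.1 - 1, by omega⟩, z, fun h => hz1 h.symm,
          adj_pred G w hpath hl, hz, Or.inr ⟨⟨i.1 - 1, by omega⟩, ?_, rfl⟩, Or.inl hzS⟩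
        show min (i.1-1) (n - (i.1-1)) + 1 ≤ t
        omega
      · refine ⟨w ⟨i.1 + 1, by omega⟩, z, fun h => hz2 h.symm,
          adj_succ G w hpath hr, hz, Or.inr ⟨⟨i.1 + 1, by omega⟩, ?_, rfl⟩, Or.inl hzS⟩
        show min (i.1+1) (n - (i.1+1)) + 1 ≤ t
        omega
  have hblock : ∀ (i : Fin (n+1)) (t : ℕ), t + 1 < due i →
      ∀ a b, a ≠ b → G.Adj (w i) a → G.Adj (w i) b →
        a ∈ sdue w due t → b ∈ sdue w due t → False := by
    intro i t hlt a b hab ha hb haS hbS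
    have hmin : t + 1 ≤ min i.1 (n - i.1) := by
      simp only [hdue_def] at hlt; omega
    have hl : 1 ≤ i.1 := by omega
    have hr : i.1 + 1 ≤ n := by omega
    have hS : ∀ c, G.Adj (w i) c → c ∈ sdue w due t → c ∉ Set.range w := by
      intro c hc hcS
      rcases hcS with h | ⟨j, hj, rfl⟩
      · exact h
      · exfalso
        rcases (hpath.2 i j).mp hc with h' | h'
        · simp only [Set.mem_setOf_eq, hdue_def] at hj; omega
        · simp only [Set.mem_setOf_eq, hdue_def] at hj; omega
    have haS' := hS a ha haS
    have hbS' := hS b hb hbS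
    have hprev := adj_pred G w hpath hl
    have hnext := adj_succ G w hpath hr
    have hpn : w ⟨i.1 - 1, by omega⟩ ≠ w ⟨i.1 + 1, by omega⟩ := by
      intro h
      have h2 : i.1 - 1 = i.1 + 1 := Fin.val_eq_of_eq (hpath.1 h)
      omega
    have hpin := helper_pin3 G (hmax (w i)) hpn
      (fun h => haS' ⟨_, h⟩) (fun h => haS' ⟨_, h⟩) hprev hnext ha b hb
    rcases hpin with h | h | h
    · exact hbS' ⟨_, h.symm⟩
    · exact hbS' ⟨_, h.symm⟩
    · exact hab h.symm
  have hM : ∀ i, due i ≤ n / 2 + 1 := by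
    intro i
    have := i.isLt
    simp only [hdue_def]
    omega
  have hi0 : due ⟨n / 2, by omega⟩ = n / 2 + 1 := by
    simp only [hdue_def]
    congr 1
    show min (n/2) (n - n/2) = n/2
    omega
  exact backward_main G w hpath.1 due h1 hstep hblock (n/2+1) hM ⟨n/2, by omega⟩ hi0 (by omega)

lemma backward_b (hmax : ∀ v, G.degree v ≤ 3) (hpath : IsInducedPath G w)
    (hdeg3 : ∀ i : Fin (n+1), i ≠ Fin.last n → G.degree (w i) = 3)
    (hdeg2 : G.degree (w (Fin.last n)) = 2) :
    Percolates G (Set.range w)ᶜ ∧ n + 1 ≤ percTime G (Set.range w)ᶜ := by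
  set due : Fin (n+1) → ℕ := fun i => i.1 + 1 with hdue_def
  have h1 : ∀ i, 1 ≤ due i := fun i => by simp [hdue_def]
  have hlastval : (Fin.last n).1 = n := rfl
  have hne_last : ∀ i : Fin (n+1), i.1 < n → i ≠ Fin.last n := by
    intro i hi h
    have := Fin.val_eq_of_eq h
    omega
  have hstep : ∀ (i : Fin (n+1)) (t : ℕ), due i = t + 1 →
      ∃ a b, a ≠ b ∧ G.Adj (w i) a ∧ G.Adj (w i) b ∧
        a ∈ sdue w due t ∧ b ∈ sdue w due t := by
    intro i t hd
    have hival : i.1 = t := by simpa [hdue_def] using hd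
    rcases Nat.eq_zero_or_pos t with rfl | htpos
    · rcases Nat.eq_zero_or_pos n with rfl | hn
      · -- single vertex of degree 2
        have hilast0 : i = Fin.last 0 := Fin.ext (by omega)
        obtain ⟨x, hx⟩ := helper_ex_one G
          (show 1 ≤ G.degree (w i) by rw [hilast0, hdeg2]; omega)
        obtain ⟨z, hzx, hz⟩ := helper_ex2 G (hilast0 ▸ hdeg2) hx
        have hxS : x ∉ Set.range w := mem_S_of G w hpath hx
          (fun h _ => by omega) (fun h _ => by omega)
        have hzS : z ∉ Set.range w := mem_S_of G w hpath hz
          (fun h _ => by omega) (fun h _ => by omega)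
        exact ⟨z, x, hzx, hz, hx, Or.inl hzS, Or.inl hxS⟩
      · exact two_seeds_deg3_left G w hpath hival
          (hdeg3 i (hne_last i (by omega))) due 0
    · have hl : 1 ≤ i.1 := by omega
      have hprev := adj_pred G w hpath hl
      have hprev_mem : w ⟨i.1 - 1, by omega⟩ ∈ sdue w due t :=
        Or.inr ⟨⟨i.1 - 1, by omega⟩, by show (i.1-1) + 1 ≤ t; omega, rfl⟩
      rcases Nat.lt_or_ge i.1 n with hint | hlast
      · obtain ⟨z, hz1, hz2, hz, hzS⟩ := third_nbr G w hpath hl (by omega)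
          (hdeg3 i (hne_last i hint))
        exact ⟨w ⟨i.1 - 1, by omega⟩, z, fun h => hz1 h.symm, hprev, hz,
          hprev_mem, Or.inl hzS⟩
      · have hilast : i = Fin.last n := Fin.ext (by omega)
        obtain ⟨z, hz1, hz⟩ := helper_ex2 G (hilast ▸ hdeg2) hprev
        have hzS : z ∉ Set.range w := mem_S_of G w hpath hz
          (fun h => hz1) (fun h => by omega)
        exact ⟨w ⟨i.1 - 1, by omega⟩, z, fun h => hz1 h.symm, hprev, hz,
          hprev_mem, Or.inl hzS⟩
  have hblock : ∀ (i : Fin (n+1)) (t : ℕ), t + 1 < due i →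
      ∀ a b, a ≠ b → G.Adj (w i) a → G.Adj (w i) b →
        a ∈ sdue w due t → b ∈ sdue w due t → False := by
    intro i t hlt a b hab ha hb haS hbS
    have hival : t + 1 ≤ i.1 := by simp only [hdue_def] at hlt; omega
    have hl : 1 ≤ i.1 := by omega
    have hS : ∀ c, G.Adj (w i) c → c ∈ sdue w due t → c ∉ Set.range w := by
      intro c hc hcS
      rcases hcS with h | ⟨j, hj, rfl⟩
      · exact h
      · exfalso
        rcases (hpath.2 i j).mp hc with h' | h'
        · simp only [Set.mem_setOf_eq, hdue_def] at hj; omega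
        · simp only [Set.mem_setOf_eq, hdue_def] at hj; omega
    have haS' := hS a ha haS
    have hbS' := hS b hb hbS
    have hprev := adj_pred G w hpath hl
    rcases Nat.lt_or_ge i.1 n with hint | hlast
    · have hnext := adj_succ G w hpath (show i.1 + 1 ≤ n by omega)
      have hpn : w ⟨i.1 - 1, by omega⟩ ≠ w ⟨i.1 + 1, by omega⟩ := by
        intro h
        have h2 : i.1 - 1 = i.1 + 1 := Fin.val_eq_of_eq (hpath.1 h)
        omega
      have hpin := helper_pin3 G (hmax (w i)) hpn
        (fun h => haS' ⟨_, h⟩) (fun h => haS' ⟨_, h⟩) hprev hnext ha b hb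
      rcases hpin with h | h | h
      · exact hbS' ⟨_, h.symm⟩
      · exact hbS' ⟨_, h.symm⟩
      · exact hab h.symm
    · have hilast : i = Fin.last n := Fin.ext (by omega)
      have hdi : G.degree (w i) ≤ 2 := le_of_eq (hilast ▸ hdeg2)
      have hpin := helper_pin2 G hdi (fun h => haS' ⟨_, h⟩) hprev ha b hb
      rcases hpin with h | h
      · exact hbS' ⟨_, h.symm⟩
      · exact hab h.symm
  have hM : ∀ i, due i ≤ n + 1 := by
    intro i
    have := i.isLt
    simp only [hdue_def]
    omega
  have hi0 : due (Fin.last n) = n + 1 := by simp [hdue_def]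
  exact backward_main G w hpath.1 due h1 hstep hblock (n+1) hM (Fin.last n) hi0 (by omega)

end BackFinish

section Tau
variable {V : Type} [Fintype V] [DecidableEq V] (G : SimpleGraph V) [DecidableRel G.Adj]
variable (S : Set V)

noncomputable def tauF (v : V) : ℕ := sInf {t | v ∈ stage G S t}

variable {G S}
structure ChainT (G : SimpleGraph V) (S : Set V) (s : ℕ) (c : ℕ → V) (u : ℕ → V) : Prop where
  htau : ∀ j, 1 ≤ j → j ≤ s → tauF G S (c j) = j
  hadj : ∀ j, 2 ≤ j → j ≤ s → G.Adj (c j) (c (j - 1))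
  hu : ∀ j, 2 ≤ j → j ≤ s → G.Adj (c j) (u j) ∧ u j ≠ c (j-1) ∧ u j ∈ stage G S (j-1)
  hbot : ∃ σ1 σ2, σ1 ≠ σ2 ∧ σ1 ∈ S ∧ σ2 ∈ S ∧ G.Adj (c 1) σ1 ∧ G.Adj (c 1) σ2

variable (hP : Percolates G S)
include hP

lemma tau_spec (v : V) : v ∈ stage G S (tauF G S v) := by
  obtain ⟨T, hT⟩ := hP
  have hv : v ∈ stage G S T := by rw [hT]; trivial
  exact Nat.sInf_mem (⟨T, hv⟩ : Set.Nonempty {t | v ∈ stage G S t})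

omit hP in
lemma tau_le {v : V} {t : ℕ} (h : v ∈ stage G S t) : tauF G S v ≤ t := Nat.sInf_le h

lemma mem_stage_iff_tau {v : V} {t : ℕ} : v ∈ stage G S t ↔ tauF G S v ≤ t :=
  ⟨tau_le, fun h => stage_mono_s2 G S h (tau_spec hP v)⟩

lemma notMem_of_tau_gt {v : V} {t : ℕ} (h : t < tauF G S v) : v ∉ stage G S t :=
  fun hc => absurd (tau_le hc) (by omega)

lemma tau_zero_iff {v : V} : tauF G S v = 0 ↔ v ∈ S := by
  constructor
  · intro h
    have := tau_spec hP v
    rwa [h] at this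
  · intro h
    exact Nat.le_zero.mp (tau_le (by exact h))

lemma tau_le_perc (v : V) : tauF G S v ≤ percTime G S :=
  tau_le (by rw [percTime_stage G S hP]; trivial)

lemma step_extract {v : V} {t : ℕ} (h : tauF G S v = t + 1) :
    ∃ a b, a ≠ b ∧ G.Adj v a ∧ G.Adj v b ∧ a ∈ stage G S t ∧ b ∈ stage G S t := by
  have h1 : v ∈ stage G S (t+1) := h ▸ tau_spec hP v
  have h2 : v ∉ stage G S t := notMem_of_tau_gt hP (by omega)
  rcases h1 with h1 | ⟨a, b, hab, ha, hb, haS, hbS⟩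
  · exact absurd h1 h2
  · exact ⟨a, b, hab, ha, hb, haS, hbS⟩

omit hP in
lemma block {v : V} {t : ℕ} (h : v ∉ stage G S (t + 1)) :
    ∀ a b, G.Adj v a → G.Adj v b → a ∈ stage G S t → b ∈ stage G S t → a = b := by
  intro a b ha hb haS hbS
  by_contra hab
  exact h (Or.inr ⟨a, b, hab, ha, hb, haS, hbS⟩)

/-- A descending chain of infection: `c j` is infected exactly at time `j`,
for `1 ≤ j ≤ s`; `u j` is a second early neighbor of `c j`. -/
lemma chain_exists : ∀ s, 1 ≤ s → ∀ v : V, tauF G S v = s →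
    ∃ c u, ChainT G S s c u ∧ c s = v := by
  intro s
  induction s with
  | zero => omega
  | succ s ih =>
    intro _ v hv
    rcases Nat.eq_zero_or_pos s with rfl | hs
    · -- s = 1
      obtain ⟨σ1, σ2, hσ, h1, h2, hσ1S, hσ2S⟩ := step_extract hP hv
      refine ⟨fun _ => v, fun _ => v, ⟨?_, ?_, ?_, ?_⟩, rfl⟩
      · intro j hj1 hj2
        have : j = 1 := by omega
        subst this; exact hv
      · intro j hj1 hj2; omega
      · intro j hj1 hj2; omega
      · exact ⟨σ1, σ2, hσ, hσ1S, hσ2S, h1, h2⟩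
    · -- s ≥ 1, time s + 1
      obtain ⟨a, b, hab, ha, hb, haS, hbS⟩ := step_extract hP hv
      have hvnot : v ∉ stage G S s := notMem_of_tau_gt hP (by omega)
      have hvnot' : v ∉ stage G S (s - 1 + 1) := by
        have : s - 1 + 1 = s := by omega
        rwa [this]
      -- one of a,b has tau exactly s
      have key : ∃ a' b', a' ≠ b' ∧ G.Adj v a' ∧ G.Adj v b' ∧
          tauF G S a' = s ∧ b' ∈ stage G S s := by
        by_cases hA : a ∈ stage G S (s-1)
        · refine ⟨b, a, hab.symm, hb, ha, ?_, haS⟩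
          have hbn : b ∉ stage G S (s-1) := by
            intro hbn
            exact hab (block hvnot' a b ha hb hA hbn)
          have := tau_le hbS
          have := (mem_stage_iff_tau hP (v := b) (t := s-1)).not.mp hbn
          omega
        · refine ⟨a, b, hab, ha, hb, ?_, hbS⟩
          have := tau_le haS
          have := (mem_stage_iff_tau hP (v := a) (t := s-1)).not.mp hA
          omega
      obtain ⟨a', b', hab', ha', hb', hta', hbS'⟩ := key
      obtain ⟨c, u, hc, hcs⟩ := ih hs a' hta'
      refine ⟨fun j => if j = s + 1 then v else c j,
              fun j => if j = s + 1 then b' else u j, ⟨?_, ?_, ?_, ?_⟩, by simp⟩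
      · intro j hj1 hj2
        by_cases h : j = s + 1
        · subst h; simpa using hv
        · have : j ≤ s := by omega
          simpa [h] using hc.htau j hj1 this
      · intro j hj1 hj2
        by_cases h : j = s + 1
        · subst h
          have h1 : s + 1 - 1 = s := by omega
          simp only [if_pos rfl, h1, if_neg (by omega : s ≠ s + 1)]
          rw [hcs]
          exact ha'
        · have hj : j ≤ s := by omega
          have h2 : j - 1 ≠ s + 1 := by omega
          simpa [h, h2] using hc.hadj j hj1 hj
      · intro j hj1 hj2
        by_cases h : j = s + 1
        · subst h
          have h1 : s + 1 - 1 = s := by omega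
          simp only [if_pos rfl, h1, if_neg (by omega : s ≠ s + 1)]
          rw [hcs]
          exact ⟨hb', Ne.symm hab', hbS'⟩
        · have hj : j ≤ s := by omega
          have h2 : j - 1 ≠ s + 1 := by omega
          simpa [h, h2] using hc.hu j hj1 hj
      · obtain ⟨σ1, σ2, h1, h2, h3, h4, h5⟩ := hc.hbot
        refine ⟨σ1, σ2, h1, h2, h3, ?_, ?_⟩
        · simp only [if_neg (show (1:ℕ) ≠ s + 1 by omega)]
          exact h4
        · simp only [if_neg (show (1:ℕ) ≠ s + 1 by omega)]
          exact h5

end Tau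

section ChainLemmas
variable {V : Type} [Fintype V] [DecidableEq V] {G : SimpleGraph V} [DecidableRel G.Adj] {S : Set V}
variable (hmax : ∀ v, G.degree v ≤ 3) (hP : Percolates G S)
variable {s : ℕ} {c u : ℕ → V} (hc : ChainT G S s c u)

include hP hc

lemma chain_tau_le_of_stage {j t : ℕ} (h1 : 1 ≤ j) (h2 : j ≤ s) (h : c j ∈ stage G S t) :
    j ≤ t := by
  have := tau_le h
  rw [hc.htau j h1 h2] at this
  exact this

lemma chain_not_seed {j : ℕ} (h1 : 1 ≤ j) (h2 : j ≤ s) : c j ∉ S := by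
  intro h
  have := (tau_zero_iff hP).mpr h
  rw [hc.htau j h1 h2] at this
  omega

lemma chain_inj {j j' : ℕ} (h1 : 1 ≤ j) (h2 : j ≤ s) (h1' : 1 ≤ j') (h2' : j' ≤ s)
    (hne : j ≠ j') : c j ≠ c j' := by
  intro h
  have e1 := hc.htau j h1 h2
  have e2 := hc.htau j' h1' h2'
  rw [h, e2] at e1
  omega

include hmax

lemma chain_pin_mid {j : ℕ} (h2 : 2 ≤ j) (h3 : j + 1 ≤ s) :
    ∀ z, G.Adj (c j) z → z = c (j+1) ∨ z = c (j-1) ∨ z = u j := by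
  have hA : G.Adj (c j) (c (j+1)) := (hc.hadj (j+1) (by omega) h3).symm
  have hB : G.Adj (c j) (c (j-1)) := hc.hadj j h2 (by omega)
  obtain ⟨hU, hUne, hUst⟩ := hc.hu j h2 (by omega)
  have hne1 : c (j+1) ≠ c (j-1) := chain_inj hP hc (by omega) h3 (by omega) (by omega) (by omega)
  have hne2 : c (j+1) ≠ u j := by
    intro h
    have := chain_tau_le_of_stage hP hc (by omega) h3 (h ▸ hUst)
    omega
  have hne3 : c (j-1) ≠ u j := Ne.symm hUne
  exact helper_pin3 G (hmax _) hne1 hne2 hne3 hA hB hU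

lemma chain_deg_mid {j : ℕ} (h2 : 2 ≤ j) (h3 : j + 1 ≤ s) : G.degree (c j) = 3 := by
  have hA : G.Adj (c j) (c (j+1)) := (hc.hadj (j+1) (by omega) h3).symm
  have hB : G.Adj (c j) (c (j-1)) := hc.hadj j h2 (by omega)
  obtain ⟨hU, hUne, hUst⟩ := hc.hu j h2 (by omega)
  have hne1 : c (j+1) ≠ c (j-1) := chain_inj hP hc (by omega) h3 (by omega) (by omega) (by omega)
  have hne2 : c (j+1) ≠ u j := by
    intro h
    have := chain_tau_le_of_stage hP hc (by omega) h3 (h ▸ hUst)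
    omega
  exact helper_deg3 G (hmax _) hne1 hne2 (Ne.symm hUne) hA hB hU

lemma chain_pin_bot (hs : 2 ≤ s) :
    ∀ z, G.Adj (c 1) z → z = c 2 ∨ z ∈ S := by
  obtain ⟨σ1, σ2, hσ, hσ1, hσ2, ha1, ha2⟩ := hc.hbot
  have hA : G.Adj (c 1) (c 2) := (hc.hadj 2 (by omega) hs).symm
  have hne1 : c 2 ≠ σ1 := fun h => chain_not_seed hP hc (by omega) hs (h ▸ hσ1)
  have hne2 : c 2 ≠ σ2 := fun h => chain_not_seed hP hc (by omega) hs (h ▸ hσ2)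
  intro z hz
  rcases helper_pin3 G (hmax _) hne1 hne2 hσ hA ha1 ha2 z hz with h | h | h
  · exact Or.inl h
  · exact Or.inr (h ▸ hσ1)
  · exact Or.inr (h ▸ hσ2)

lemma chain_deg_bot (hs : 2 ≤ s) : G.degree (c 1) = 3 := by
  obtain ⟨σ1, σ2, hσ, hσ1, hσ2, ha1, ha2⟩ := hc.hbot
  have hA : G.Adj (c 1) (c 2) := (hc.hadj 2 (by omega) hs).symm
  have hne1 : c 2 ≠ σ1 := fun h => chain_not_seed hP hc (by omega) hs (h ▸ hσ1)
  have hne2 : c 2 ≠ σ2 := fun h => chain_not_seed hP hc (by omega) hs (h ▸ hσ2)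
  exact helper_deg3 G (hmax _) hne1 hne2 hσ hA ha1 ha2

lemma chain_pin_top (hs : 2 ≤ s) {e : V} (he : G.Adj (c s) e) (heS : e ∉ stage G S (s-1)) :
    ∀ z, G.Adj (c s) z → z = c (s-1) ∨ z = u s ∨ z = e := by
  have hB : G.Adj (c s) (c (s-1)) := hc.hadj s hs (by omega)
  obtain ⟨hU, hUne, hUst⟩ := hc.hu s hs (by omega)
  have hcm : c (s-1) ∈ stage G S (s-1) := by
    have := hc.htau (s-1) (by omega) (by omega)
    exact (mem_stage_iff_tau hP).mpr (le_of_eq this)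
  have hne1 : c (s-1) ≠ u s := Ne.symm hUne
  have hne2 : c (s-1) ≠ e := fun h => heS (h ▸ hcm)
  have hne3 : u s ≠ e := fun h => heS (h ▸ hUst)
  exact helper_pin3 G (hmax _) hne1 hne2 hne3 hB hU he

lemma chain_deg_top (hs : 2 ≤ s) {e : V} (he : G.Adj (c s) e) (heS : e ∉ stage G S (s-1)) :
    G.degree (c s) = 3 := by
  have hB : G.Adj (c s) (c (s-1)) := hc.hadj s hs (by omega)
  obtain ⟨hU, hUne, hUst⟩ := hc.hu s hs (by omega)
  have hcm : c (s-1) ∈ stage G S (s-1) := by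
    have := hc.htau (s-1) (by omega) (by omega)
    exact (mem_stage_iff_tau hP).mpr (le_of_eq this)
  have hne1 : c (s-1) ≠ u s := Ne.symm hUne
  have hne2 : c (s-1) ≠ e := fun h => heS (h ▸ hcm)
  have hne3 : u s ≠ e := fun h => heS (h ▸ hUst)
  exact helper_deg3 G (hmax _) hne1 hne2 hne3 hB hU he

lemma chain_pin_top1 (hs : s = 1) {e : V} (he : G.Adj (c 1) e) (heS : e ∉ stage G S 0) :
    ∀ z, G.Adj (c 1) z → z ∈ S ∨ z = e := by
  obtain ⟨σ1, σ2, hσ, hσ1, hσ2, ha1, ha2⟩ := hc.hbot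
  have h0 : stage G S 0 = S := rfl
  have hne1 : σ1 ≠ e := fun h => heS (h ▸ (h0 ▸ hσ1))
  have hne2 : σ2 ≠ e := fun h => heS (h ▸ (h0 ▸ hσ2))
  intro z hz
  rcases helper_pin3 G (hmax _) hσ hne1 hne2 ha1 ha2 he z hz with h | h | h
  · exact Or.inl (h ▸ hσ1)
  · exact Or.inl (h ▸ hσ2)
  · exact Or.inr h

lemma chain_deg_top1 (hs : s = 1) {e : V} (he : G.Adj (c 1) e) (heS : e ∉ stage G S 0) :
    G.degree (c 1) = 3 := by
  obtain ⟨σ1, σ2, hσ, hσ1, hσ2, ha1, ha2⟩ := hc.hbot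
  have h0 : stage G S 0 = S := rfl
  have hne1 : σ1 ≠ e := fun h => heS (h ▸ (h0 ▸ hσ1))
  have hne2 : σ2 ≠ e := fun h => heS (h ▸ (h0 ▸ hσ2))
  exact helper_deg3 G (hmax _) hσ hne1 hne2 ha1 ha2 he

lemma chain_nochord {j j' : ℕ} (h1 : 1 ≤ j') (h2 : j' + 2 ≤ j) (h3 : j ≤ s) :
    ¬ G.Adj (c j) (c j') := by
  intro hadj
  have hadj' : G.Adj (c j') (c j) := hadj.symm
  rcases Nat.lt_or_ge j' 2 with hj' | hj'
  · have hj'1 : j' = 1 := by omega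
    subst hj'1
    rcases chain_pin_bot hmax hP hc (by omega) (c j) hadj' with h | h
    · exact chain_inj hP hc (by omega) h3 (by omega) (by omega) (by omega) h
    · exact chain_not_seed hP hc (by omega) h3 h
  · rcases chain_pin_mid hmax hP hc hj' (by omega) (c j) hadj' with h | h | h
    · exact chain_inj hP hc (by omega) h3 (by omega) (by omega) (by omega) h
    · exact chain_inj hP hc (by omega) h3 (by omega) (by omega) (by omega) h
    · obtain ⟨_, _, hUst⟩ := hc.hu j' hj' (by omega)
      have := chain_tau_le_of_stage hP hc (by omega) h3 (h ▸ hUst)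
      omega

lemma chain_deg_low {j : ℕ} (h1 : 1 ≤ j) (h2 : j + 1 ≤ s) : G.degree (c j) = 3 := by
  rcases Nat.lt_or_ge j 2 with hj | hj
  · have : j = 1 := by omega
    subst this
    exact chain_deg_bot hmax hP hc (by omega)
  · exact chain_deg_mid hmax hP hc hj h2

end ChainLemmas

section Cross
variable {V : Type} [Fintype V] [DecidableEq V] {G : SimpleGraph V} [DecidableRel G.Adj] {S : Set V}
variable (hmax : ∀ v, G.degree v ≤ 3) (hP : Percolates G S)
variable {T s' : ℕ} {cC uC d ud : ℕ → V}
variable (hC : ChainT G S T cC uC) (hD : ChainT G S s' d ud)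
variable (hT2 : 2 ≤ T) (hs1 : 1 ≤ s') (hsle : s' ≤ T) (hsge : T ≤ s' + 1)
variable (hvx : G.Adj (cC T) (d s')) (hxne : d s' ≠ cC (T-1))

include hmax hP hC hD hT2 hs1 hsle hsge hvx hxne

lemma cross_top_not_low : ∀ t, t ≤ s' - 1 → cC T ∉ stage G S t := by
  intro t ht
  apply notMem_of_tau_gt hP
  rw [hC.htau T (by omega) (by omega)]
  omega

lemma CL1aux : ∀ i j, j + i = s' → 1 ≤ j → cC j ≠ d j := by
  intro i
  induction i with
  | zero =>
    intro j hj hj1 h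
    have hjs : j = s' := by omega
    rw [hjs] at h
    rcases Nat.lt_or_ge s' T with hlt | hge
    · apply hxne
      rw [← h]
      exact congrArg cC (by omega : s' = T - 1)
    · apply hvx.ne
      rw [show T = s' from by omega]
      exact h
  | succ i ih =>
    intro j hj hj1 h
    have hjs : j + 1 ≤ s' := by omega
    have hAdj : G.Adj (cC (j+1)) (cC j) := hC.hadj (j+1) (by omega) (by omega)
    rw [h] at hAdj
    have hAdj' : G.Adj (d j) (cC (j+1)) := hAdj.symm
    have hτ : tauF G S (cC (j+1)) = j + 1 := hC.htau (j+1) (by omega) (by omega)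
    rcases Nat.lt_or_ge j 2 with hj2 | hj2
    · have hj1' : j = 1 := by omega
      have hAdj'' : G.Adj (d 1) (cC (j+1)) := by rw [hj1'] at hAdj' ⊢; exact hAdj'
      rcases chain_pin_bot hmax hP hD (by omega) (cC (j+1)) hAdj'' with hh | hh
      · rw [show (2:ℕ) = j + 1 from by omega] at hh
        exact ih (j+1) (by omega) (by omega) hh
      · have h0 := (tau_zero_iff hP).mpr hh
        rw [hτ] at h0
        omega
    · rcases chain_pin_mid hmax hP hD hj2 (by omega) (cC (j+1)) hAdj' with hh | hh | hh
      · exact ih (j+1) (by omega) (by omega) hh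
      · have := hD.htau (j-1) (by omega) (by omega)
        rw [← hh, hτ] at this
        omega
      · obtain ⟨_, _, hUst⟩ := hD.hu j hj2 (by omega)
        rw [← hh] at hUst
        have := tau_le hUst
        rw [hτ] at this
        omega

lemma CLdist : ∀ j j', 1 ≤ j → j ≤ T → 1 ≤ j' → j' ≤ s' → cC j ≠ d j' := by
  intro j j' h1 h2 h3 h4 h
  by_cases hjj : j = j'
  · subst hjj
    exact CL1aux hmax hP hC hD hT2 hs1 hsle hsge hvx hxne (s' - j) j (by omega) h1 h
  · have e1 := hC.htau j h1 h2
    have e2 := hD.htau j' h3 h4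
    rw [h, e2] at e1
    omega

lemma cross_low {j j' : ℕ} (hj1 : 1 ≤ j) (hj'1 : 1 ≤ j') (hj's : j' ≤ s') (hlt : j < j')
    (hAdj : G.Adj (cC j) (d j')) : False := by
  have hτD : tauF G S (d j') = j' := hD.htau j' hj'1 hj's
  have hjT : j + 1 ≤ T := by omega
  rcases Nat.lt_or_ge j 2 with hj2 | hj2
  · have : j = 1 := by omega
    subst this
    rcases chain_pin_bot hmax hP hC (by omega) (d j') hAdj with hh | hh
    · exact CLdist hmax hP hC hD hT2 hs1 hsle hsge hvx hxne 2 j' (by omega) (by omega) hj'1 hj's hh.symm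
    · have := (tau_zero_iff hP).mpr hh
      omega
  · rcases chain_pin_mid hmax hP hC hj2 hjT (d j') hAdj with hh | hh | hh
    · exact CLdist hmax hP hC hD hT2 hs1 hsle hsge hvx hxne (j+1) j' (by omega) (by omega) hj'1 hj's hh.symm
    · exact CLdist hmax hP hC hD hT2 hs1 hsle hsge hvx hxne (j-1) j' (by omega) (by omega) hj'1 hj's hh.symm
    · obtain ⟨_, _, hUst⟩ := hC.hu j hj2 (by omega)
      rw [← hh] at hUst
      have := tau_le hUst
      rw [hτD] at this
      omega

lemma CL2 : ∀ j j', 1 ≤ j → j ≤ T → 1 ≤ j' → j' ≤ s' → ¬(j = T ∧ j' = s') →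
    ¬ G.Adj (cC j) (d j') := by
  intro j j' h1 h2 h3 h4 hexcl hAdj
  have hAdj' : G.Adj (d j') (cC j) := hAdj.symm
  have hτC : tauF G S (cC j) = j := hC.htau j h1 h2
  by_cases hjs : j' = s'
  · subst hjs
    rcases Nat.lt_or_ge j' 2 with hs2 | hs2
    · -- s' = 1, use pin_top1
      have hs'1 : j' = 1 := by omega
      have heS : cC T ∉ stage G S 0 :=
        cross_top_not_low hmax hP hC hD hT2 hs1 hsle hsge hvx hxne 0 (by omega)
      have he : G.Adj (d 1) (cC T) := by
        rw [← hs'1]; exact hvx.symm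
      have heS' : cC T ∉ stage G S 0 := heS
      have hAdj'' : G.Adj (d 1) (cC j) := by rw [← hs'1]; exact hAdj'
      have hpin := chain_pin_top1 hmax hP hD hs'1 he heS' (cC j) hAdj''
      rcases hpin with hh | hh
      · have := (tau_zero_iff hP).mpr hh
        omega
      · have hjT : j = T := by
          have := hC.htau T (by omega) (by omega)
          have h' : tauF G S (cC j) = T := by rw [hh, this]
          omega
        exact hexcl ⟨hjT, rfl⟩
    · -- s' ≥ 2, pin_top
      have heS : cC T ∉ stage G S (j' - 1) :=
        cross_top_not_low hmax hP hC hD hT2 hs1 hsle hsge hvx hxne (j'-1) (by omega)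
      have hpin := chain_pin_top hmax hP hD hs2 hvx.symm heS (cC j) hAdj'
      rcases hpin with hh | hh | hh
      · exact CLdist hmax hP hC hD hT2 hs1 hsle hsge hvx hxne j (j'-1) h1 h2 (by omega) (by omega) hh
      · -- cC j = ud s'
        obtain ⟨_, _, hUst⟩ := hD.hu j' hs2 (by omega)
        rw [← hh] at hUst
        have hjle := tau_le hUst
        rw [hτC] at hjle
        exact cross_low hmax hP hC hD hT2 hs1 hsle hsge hvx hxne h1 h3 h4 (by omega) hAdj
      · have hjT : j = T := by
          have := hC.htau T (by omega) (by omega)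
          have h' : tauF G S (cC j) = T := by rw [hh, this]
          omega
        exact hexcl ⟨hjT, rfl⟩
  · rcases Nat.lt_or_ge j' 2 with hj'2 | hj'2
    · have : j' = 1 := by omega
      subst this
      rcases chain_pin_bot hmax hP hD (by omega) (cC j) hAdj' with hh | hh
      · exact CLdist hmax hP hC hD hT2 hs1 hsle hsge hvx hxne j 2 h1 h2 (by omega) (by omega) hh
      · have := (tau_zero_iff hP).mpr hh
        omega
    · rcases chain_pin_mid hmax hP hD hj'2 (by omega) (cC j) hAdj' with hh | hh | hh
      · exact CLdist hmax hP hC hD hT2 hs1 hsle hsge hvx hxne j (j'+1) h1 h2 (by omega) (by omega) hh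
      · exact CLdist hmax hP hC hD hT2 hs1 hsle hsge hvx hxne j (j'-1) h1 h2 (by omega) (by omega) hh
      · obtain ⟨_, _, hUst⟩ := hD.hu j' hj'2 (by omega)
        rw [← hh] at hUst
        have hjle := tau_le hUst
        rw [hτC] at hjle
        exact cross_low hmax hP hC hD hT2 hs1 hsle hsge hvx hxne h1 h3 h4 (by omega) hAdj

end Cross

section AssembleB
variable {V : Type} [Fintype V] [DecidableEq V] {G : SimpleGraph V} [DecidableRel G.Adj] {S : Set V}
variable (hmax : ∀ v, G.degree v ≤ 3) (hP : Percolates G S)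

include hmax hP

lemma assemble_b {T : ℕ} {cC uC : ℕ → V} (hC : ChainT G S T cC uC) (hT1 : 1 ≤ T)
    (hdeg2 : G.degree (cC T) = 2) :
    ∃ (n : ℕ) (w : Fin (n+1) → V), IsInducedPath G w ∧
      (∀ i : Fin (n+1), i ≠ Fin.last n → G.degree (w i) = 3) ∧
      G.degree (w (Fin.last n)) = 2 ∧ n = T - 1 := by
  refine ⟨T - 1, fun i => cC (i.1 + 1), ⟨?_, ?_⟩, ?_, ?_, rfl⟩
  · -- injective
    intro i j h
    have h' : cC (i.1+1) = cC (j.1+1) := h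
    have hi := hC.htau (i.1+1) (by omega) (by have := i.isLt; omega)
    have hj := hC.htau (j.1+1) (by omega) (by have := j.isLt; omega)
    rw [h', hj] at hi
    exact Fin.ext (by omega)
  · -- adjacency iff
    intro i j
    have hiT : i.1 + 1 ≤ T := by have := i.isLt; omega
    have hjT : j.1 + 1 ≤ T := by have := j.isLt; omega
    constructor
    · intro hAdj
      rcases Nat.lt_trichotomy i.1 j.1 with hlt | heq | hgt
      · rcases Nat.lt_or_ge (i.1 + 1) j.1 with h2 | h2
        · exact absurd hAdj.symm (chain_nochord hmax hP hC (by omega) (by omega) hjT)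
        · left; omega
      · exact absurd hAdj (by rw [show j = i from Fin.ext heq.symm]; exact G.irrefl)
      · rcases Nat.lt_or_ge (j.1 + 1) i.1 with h2 | h2
        · exact absurd hAdj (chain_nochord hmax hP hC (by omega) (by omega) hiT)
        · right; omega
    · intro h
      rcases h with h | h
      · have := hC.hadj (j.1+1) (by omega) hjT
        have hr : j.1 + 1 - 1 = i.1 + 1 := by omega
        rw [hr] at this
        exact this.symm
      · have := hC.hadj (i.1+1) (by omega) hiT
        have hr : i.1 + 1 - 1 = j.1 + 1 := by omega
        rw [hr] at this
        exact this
  · -- degrees of non-last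
    intro i hi
    have hilt : i.1 < T - 1 := by
      have h1 := i.isLt
      rcases Nat.lt_or_ge i.1 (T-1) with h | h
      · exact h
      · exact absurd (Fin.ext (show i.1 = (Fin.last (T-1)).1 by show i.1 = T - 1; omega)) hi
    exact chain_deg_low hmax hP hC (by omega) (by omega)
  · -- last has degree 2
    show G.degree (cC ((Fin.last (T-1)).1 + 1)) = 2
    have : (Fin.last (T-1)).1 + 1 = T := by
      show T - 1 + 1 = T
      omega
    rw [this]
    exact hdeg2

end AssembleB

section AssembleA
variable {V : Type} [Fintype V] [DecidableEq V] {G : SimpleGraph V} [DecidableRel G.Adj] {S : Set V}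
variable (hmax : ∀ v, G.degree v ≤ 3) (hP : Percolates G S)
variable {T s' : ℕ} {cC uC d ud : ℕ → V}
variable (hC : ChainT G S T cC uC) (hD : ChainT G S s' d ud)
variable (hT2 : 2 ≤ T) (hs1 : 1 ≤ s') (hsle : s' ≤ T) (hsge : T ≤ s' + 1)
variable (hvx : G.Adj (cC T) (d s')) (hxne : d s' ≠ cC (T-1))
variable (hvdeg : G.degree (cC T) = 3)

include hmax hP hC hD hT2 hs1 hsle hsge hvx hxne hvdeg

lemma assemble_a :
    ∃ (n : ℕ) (w : Fin (n+1) → V), IsInducedPath G w ∧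
      (∀ i : Fin (n+1), G.degree (w i) = 3) ∧ n = T + s' - 1 := by
  set n := T + s' - 1 with hn
  have hn1 : n + 1 = T + s' := by omega
  set w : Fin (n+1) → V := fun i => if i.1 + 1 ≤ T then cC (i.1 + 1) else d (T + s' - i.1)
    with hw
  have hwC : ∀ i : Fin (n+1), i.1 + 1 ≤ T → w i = cC (i.1 + 1) := by
    intro i h; simp only [hw, if_pos h]
  have hwD : ∀ i : Fin (n+1), T ≤ i.1 → w i = d (T + s' - i.1) := by
    intro i h
    simp only [hw, if_neg (by omega : ¬ (i.1 + 1 ≤ T))]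
  have hDlo : ∀ i : Fin (n+1), T ≤ i.1 → 1 ≤ T + s' - i.1 ∧ T + s' - i.1 ≤ s' := by
    intro i h
    have := i.isLt
    omega
  -- tau values
  have htw : ∀ i : Fin (n+1), i.1 + 1 ≤ T → tauF G S (w i) = i.1 + 1 := by
    intro i h
    rw [hwC i h]
    exact hC.htau _ (by omega) h
  have htw' : ∀ i : Fin (n+1), T ≤ i.1 → tauF G S (w i) = T + s' - i.1 := by
    intro i h
    rw [hwD i h]
    exact hD.htau _ (hDlo i h).1 (hDlo i h).2
  -- injectivity
  have hinj : Function.Injective w := by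
    intro i j h
    rcases Nat.lt_or_ge i.1 T with hi | hi <;> rcases Nat.lt_or_ge j.1 T with hj | hj
    · have e1 := htw i (by omega)
      have e2 := htw j (by omega)
      rw [h, e2] at e1
      exact Fin.ext (by omega)
    · exfalso
      rw [hwC i (by omega), hwD j hj] at h
      exact CLdist hmax hP hC hD hT2 hs1 hsle hsge hvx hxne (i.1+1) (T + s' - j.1)
        (by omega) (by omega) (hDlo j hj).1 (hDlo j hj).2 h
    · exfalso
      rw [hwC j (by omega), hwD i hi] at h
      exact CLdist hmax hP hC hD hT2 hs1 hsle hsge hvx hxne (j.1+1) (T + s' - i.1)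
        (by omega) (by omega) (hDlo i hi).1 (hDlo i hi).2 h.symm
    · have e1 := htw' i hi
      have e2 := htw' j hj
      rw [h, e2] at e1
      have hi' := i.isLt
      have hj' := j.isLt
      exact Fin.ext (by omega)
  -- adjacency: mixed case helper
  have hmixed : ∀ i j : Fin (n+1), i.1 < T → T ≤ j.1 →
      (G.Adj (w i) (w j) ↔ (i.1 + 1 = j.1 ∨ j.1 + 1 = i.1)) := by
    intro i j hi hj
    rw [hwC i (by omega), hwD j hj]
    constructor
    · intro hAdj
      by_cases hcase : i.1 + 1 = T ∧ T + s' - j.1 = s'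
      · left
        have := j.isLt
        omega
      · exact absurd hAdj (CL2 hmax hP hC hD hT2 hs1 hsle hsge hvx hxne (i.1+1) (T+s'-j.1)
          (by omega) (by omega) (hDlo j hj).1 (hDlo j hj).2 hcase)
    · intro h
      rcases h with h | h
      · have h1 : i.1 + 1 = T := by omega
        have h2 : T + s' - j.1 = s' := by omega
        rw [h1, h2]
        exact hvx
      · omega
  refine ⟨n, w, ⟨hinj, ?_⟩, ?_, rfl⟩
  · -- adjacency iff
    intro i j
    rcases Nat.lt_or_ge i.1 T with hi | hi <;> rcases Nat.lt_or_ge j.1 T with hj | hj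
    · -- both C
      rw [hwC i (by omega), hwC j (by omega)]
      constructor
      · intro hAdj
        rcases Nat.lt_trichotomy i.1 j.1 with hlt | heq | hgt
        · rcases Nat.lt_or_ge (i.1 + 1) j.1 with h2 | h2
          · exact absurd hAdj.symm (chain_nochord hmax hP hC (by omega) (by omega) (by omega))
          · left; omega
        · exact absurd hAdj (by rw [show j.1 = i.1 from heq.symm]; exact G.irrefl)
        · rcases Nat.lt_or_ge (j.1 + 1) i.1 with h2 | h2
          · exact absurd hAdj (chain_nochord hmax hP hC (by omega) (by omega) (by omega))
          · right; omega
      · intro h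
        rcases h with h | h
        · have := hC.hadj (j.1+1) (by omega) (by omega)
          have hr : j.1 + 1 - 1 = i.1 + 1 := by omega
          rw [hr] at this
          exact this.symm
        · have := hC.hadj (i.1+1) (by omega) (by omega)
          have hr : i.1 + 1 - 1 = j.1 + 1 := by omega
          rw [hr] at this
          exact this
    · exact hmixed i j hi hj
    · rw [G.adj_comm, or_comm]
      exact hmixed j i hj hi
    · -- both D
      rw [hwD i hi, hwD j hj]
      have hiB := (hDlo i hi)
      have hjB := (hDlo j hj)
      constructor
      · intro hAdj
        rcases Nat.lt_trichotomy i.1 j.1 with hlt | heq | hgt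
        · -- T+s'-i > T+s'-j
          rcases Nat.lt_or_ge (i.1 + 1) j.1 with h2 | h2
          · exact absurd hAdj (chain_nochord hmax hP hD (by omega) (by omega) (by omega))
          · left; omega
        · exact absurd hAdj (by rw [show j.1 = i.1 from heq.symm]; exact G.irrefl)
        · rcases Nat.lt_or_ge (j.1 + 1) i.1 with h2 | h2
          · exact absurd hAdj.symm (chain_nochord hmax hP hD (by omega) (by omega) (by omega))
          · right; omega
      · intro h
        rcases h with h | h
        · have := hD.hadj (T + s' - i.1) (by omega) (by omega)
          have hr : T + s' - i.1 - 1 = T + s' - j.1 := by omega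
          rw [hr] at this
          exact this
        · have := hD.hadj (T + s' - j.1) (by omega) (by omega)
          have hr : T + s' - j.1 - 1 = T + s' - i.1 := by omega
          rw [hr] at this
          exact this.symm
  · -- all degrees 3
    intro i
    rcases Nat.lt_or_ge i.1 T with hi | hi
    · rcases Nat.lt_or_ge (i.1 + 1) T with h2 | h2
      · rw [hwC i (by omega)]
        exact chain_deg_low hmax hP hC (by omega) (by omega)
      · have hiT : i.1 + 1 = T := by omega
        rw [hwC i (by omega), hiT]
        exact hvdeg
    · rw [hwD i hi]
      have hiB := hDlo i hi
      rcases Nat.lt_or_ge (T + s' - i.1) s' with h2 | h2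
      · exact chain_deg_low hmax hP hD (by omega) (by omega)
      · have his : T + s' - i.1 = s' := by omega
        rw [his]
        have heS : cC T ∉ stage G S (s'-1) :=
          cross_top_not_low hmax hP hC hD hT2 hs1 hsle hsge hvx hxne (s'-1) (by omega)
        rcases Nat.lt_or_ge s' 2 with hs2 | hs2
        · have hs'1 : s' = 1 := by omega
          have he : G.Adj (d 1) (cC T) := by rw [← hs'1]; exact hvx.symm
          have heS' : cC T ∉ stage G S 0 := by
            rw [show (0:ℕ) = s' - 1 from by omega]
            exact heS
          have := chain_deg_top1 hmax hP hD hs'1 he heS'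
          rw [hs'1]
          exact this
        · exact chain_deg_top hmax hP hD hs2 hvx.symm heS

end AssembleA

section Final
variable {V : Type} [Fintype V] [DecidableEq V] (G : SimpleGraph V) [DecidableRel G.Adj]

lemma helper_two_le {v x y : V} (hxy : x ≠ y) (hx : G.Adj v x) (hy : G.Adj v y) :
    2 ≤ G.degree v := by
  have hsub : ({x, y} : Finset V) ⊆ G.neighborFinset v := by
    intro a ha
    simp only [Finset.mem_insert, Finset.mem_singleton] at ha
    rcases ha with rfl | rfl <;> simp [mem_neighborFinset, hx, hy]
  have := Finset.card_le_card hsub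
  rw [Finset.card_insert_of_notMem (by simp [hxy]), Finset.card_singleton, deg_eq] at this
  exact this

lemma forward_dir (hmax : ∀ v, G.degree v ≤ 3) (hΔ : ∃ v, G.degree v = 3) (k : ℕ)
    (hk : k ≤ maxTime G) :
    ∃ (n : ℕ) (w : Fin (n + 1) → V), IsInducedPath G w ∧
      (((∀ i, G.degree (w i) = 3) ∧ 2 * k - 2 ≤ n) ∨
       ((∀ i : Fin (n + 1), i ≠ Fin.last n → G.degree (w i) = 3) ∧
         G.degree (w (Fin.last n)) = 2 ∧ k - 1 ≤ n)) := by
  rcases Nat.lt_or_ge k 2 with hk2 | hk2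
  · -- trivial single-vertex path
    obtain ⟨v, hv⟩ := hΔ
    refine ⟨0, fun _ => v, ⟨fun i j _ => Fin.ext (by omega), ?_⟩,
      Or.inl ⟨fun _ => hv, by omega⟩⟩
    intro i j
    constructor
    · intro h
      exact absurd h G.irrefl
    · intro h
      have hi := i.isLt
      have hj := j.isLt
      rcases h with h | h <;> omega
  · -- main case
    have hset_ne : {t | ∃ S : Set V, Percolates G S ∧ percTime G S = t}.Nonempty :=
      ⟨percTime G Set.univ, Set.univ, ⟨0, rfl⟩, rfl⟩
    have hbdd : BddAbove {t | ∃ S : Set V, Percolates G S ∧ percTime G S = t} :=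
      ⟨Fintype.card V, fun x ⟨S', h', hx⟩ => hx ▸ percTime_le_card G S' h'⟩
    have hmem := Nat.sSup_mem hset_ne hbdd
    obtain ⟨S, hSperc, hSpt⟩ := hmem
    have hTk : k ≤ percTime G S := by rw [hSpt]; exact hk
    set T := percTime G S with hTdef
    have hT2 : 2 ≤ T := by omega
    have hne : stage G S (T-1) ≠ Set.univ := by
      intro h
      have : percTime G S ≤ T - 1 := Nat.sInf_le h
      omega
    obtain ⟨v, hv⟩ : ∃ v, v ∉ stage G S (T-1) := by
      by_contra h
      push_neg at h
      exact hne (Set.eq_univ_of_forall h)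
    have hτv : tauF G S v = T := by
      have h1 : tauF G S v ≤ T := tau_le_perc hSperc v
      have h2 : ¬ tauF G S v ≤ T - 1 := fun hh => hv ((mem_stage_iff_tau hSperc).mpr hh)
      omega
    obtain ⟨cC, uC, hC, hCtop⟩ := chain_exists hSperc T (by omega) v hτv
    have hAdjT : G.Adj (cC T) (cC (T-1)) := hC.hadj T hT2 (by omega)
    obtain ⟨hut, hune, hust⟩ := hC.hu T hT2 (by omega)
    have hdeg2le : 2 ≤ G.degree (cC T) :=
      helper_two_le G (Ne.symm hune) hAdjT hut
    have hdegle := hmax (cC T)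
    rcases (by omega : G.degree (cC T) = 2 ∨ G.degree (cC T) = 3) with hdeg | hdeg
    · -- case (b): degree-2 top
      obtain ⟨n, w, hpath, hd3, hd2, hnT⟩ := assemble_b hmax hSperc hC (by omega) hdeg
      exact ⟨n, w, hpath, Or.inr ⟨hd3, hd2, by omega⟩⟩
    · -- case (a): degree-3 top
      obtain ⟨z, hz1, hz2, hzadj⟩ := helper_ex3' G hdeg (Ne.symm hune) hAdjT hut
      have hvnot : cC T ∉ stage G S (T-2+1) := by
        rw [show T-2+1 = T-1 from by omega, hCtop]
        exact hv
      obtain ⟨x, hxadj, hxst, hxne⟩ :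
          ∃ x, G.Adj (cC T) x ∧ x ∉ stage G S (T-2) ∧ x ≠ cC (T-1) := by
        by_cases hu : uC T ∈ stage G S (T-2)
        · refine ⟨z, hzadj, ?_, hz1⟩
          intro hzst
          exact hz2 (block hvnot (uC T) z hut hzadj hu hzst).symm
        · exact ⟨uC T, hut, hu, hune⟩
      have hτx1 : T - 1 ≤ tauF G S x := by
        have : ¬ tauF G S x ≤ T - 2 := fun hh => hxst ((mem_stage_iff_tau hSperc).mpr hh)
        omega
      have hτx2 : tauF G S x ≤ T := tau_le_perc hSperc x
      obtain ⟨d, ud, hD, hDtop⟩ := chain_exists hSperc (tauF G S x) (by omega) x rfl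
      have hvx : G.Adj (cC T) (d (tauF G S x)) := by rw [hDtop]; exact hxadj
      have hxne' : d (tauF G S x) ≠ cC (T-1) := by rw [hDtop]; exact hxne
      obtain ⟨n, w, hpath, hd3, hnT⟩ := assemble_a hmax hSperc hC hD hT2
        (by omega) (by omega) (by omega) hvx hxne' hdeg
      exact ⟨n, w, hpath, Or.inl ⟨hd3, by omega⟩⟩

theorem stmt2 {V : Type} [Fintype V] [DecidableEq V] (G : SimpleGraph V) [DecidableRel G.Adj]
    (hconn : G.Connected) (hmax : ∀ v, G.degree v ≤ 3) (hΔ : ∃ v, G.degree v = 3) (k : ℕ) :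
    k ≤ maxTime G ↔
      ∃ (n : ℕ) (w : Fin (n + 1) → V), IsInducedPath G w ∧
        (((∀ i, G.degree (w i) = 3) ∧ 2 * k - 2 ≤ n) ∨
         ((∀ i : Fin (n + 1), i ≠ Fin.last n → G.degree (w i) = 3) ∧
           G.degree (w (Fin.last n)) = 2 ∧ k - 1 ≤ n)) := by
  constructor
  · exact forward_dir G hmax hΔ k
  · rintro ⟨n, w, hpath, hcase⟩
    rcases hcase with ⟨hdeg, hn⟩ | ⟨hd3, hd2, hn⟩
    · obtain ⟨hperc, hle⟩ := backward_a G w hmax hpath hdeg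
      have := le_maxTime G _ hperc
      omega
    · obtain ⟨hperc, hle⟩ := backward_b G w hmax hpath hd3 hd2
      have := le_maxTime G _ hperc
      omega

end Final
end

section
/- Let G be a graph with maximum degree 3, let S be a percolating set, and suppose the vertex v infected last by S (at time t = t(G,S)) has degree 2. Then G contains an induced path v_1, ..., v_t = v in which t(G,S,v_i) = i for all i, every vertex v_1, ..., v_{t-1} has degree 3 in G, and v has degree 2. -/
open SimpleGraph

/-!
Walk backwards from `v`: a vertex infected at time `m + 1` has two distinct neighbours infected by
time `m`, at least one of them exactly at time `m`. Iterating gives a walk `v_1, …, v_t = v` with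
`t(G,S,v_i) = i`. Each `v_i` with `i < t` already has two neighbours infected before it and the
later neighbour `v_{i+1}`, so degree at most 3 forces its degree to be exactly 3 and leaves no room
for a chord to some `v_j` with `j ≥ i + 2`.
-/

open scoped Finset

section

variable {V : Type} {G : SimpleGraph V} {S : Set V}

lemma stage_mono_s3 : Monotone (stage G S) :=
  monotone_nat_of_le_succ fun _ => Set.subset_union_left

lemma infTime_le_coe_iff {u : V} {n : ℕ} : infTime G S u ≤ n ↔ u ∈ stage G S n := by
  constructor
  · intro h
    have hne : {m : ℕ∞ | ∃ i : ℕ, m = i ∧ u ∈ stage G S i}.Nonempty := by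
      by_contra hempty
      rw [Set.not_nonempty_iff_eq_empty] at hempty
      simp [infTime, hempty] at h
    obtain ⟨i, hi, hu⟩ := csInf_mem hne
    rw [infTime, hi, Nat.cast_le] at h
    exact stage_mono_s3 h hu
  · exact fun hu => sInf_le ⟨n, rfl, hu⟩

lemma coe_lt_infTime_iff {u : V} {n : ℕ} : n < infTime G S u ↔ u ∉ stage G S n := by
  rw [← infTime_le_coe_iff, not_le]

lemma infTime_eq_coe_succ_iff {u : V} {m : ℕ} :
    infTime G S u = ↑(m + 1) ↔ u ∈ stage G S (m + 1) ∧ u ∉ stage G S m := by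
  rw [← infTime_le_coe_iff, ← coe_lt_infTime_iff, Nat.cast_succ,
    ← ENat.add_one_le_iff (ENat.natCast_ne_top m), le_antisymm_iff]

lemma exists_neighbors_of_infTime_eq_succ {u : V} {m : ℕ} (hu : infTime G S u = ↑(m + 1)) :
    ∃ a b, a ≠ b ∧ G.Adj u a ∧ G.Adj u b ∧ infTime G S a ≤ m ∧ infTime G S b = m := by
  obtain ⟨hin, hout⟩ := infTime_eq_coe_succ_iff.mp hu
  obtain hS | ⟨a, b, hab, hua, hub, ha, hb⟩ := hin
  · exact absurd hS hout
  rw [← infTime_le_coe_iff] at ha hb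
  cases m with
  | zero => exact ⟨a, b, hab, hua, hub, ha, nonpos_iff_eq_zero.mp hb⟩
  | succ k =>
    -- `a` and `b` cannot both be infected by time `k`, or `u` would be infected at time `k + 1`.
    by_cases hb' : b ∈ stage G S k
    · by_cases ha' : a ∈ stage G S k
      · exact absurd (Or.inr ⟨a, b, hab, hua, hub, ha', hb'⟩) hout
      · exact ⟨b, a, hab.symm, hub, hua, hb,
          infTime_eq_coe_succ_iff.mpr ⟨infTime_le_coe_iff.mp ha, ha'⟩⟩
    · exact ⟨a, b, hab, hua, hub, ha,
        infTime_eq_coe_succ_iff.mpr ⟨infTime_le_coe_iff.mp hb, hb'⟩⟩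

lemma card_neighbors_infTime_gt_add_two_le_degree [Fintype V] [DecidableRel G.Adj]
    {u : V} {m : ℕ} (hu : infTime G S u = ↑(m + 1)) :
    #{x ∈ G.neighborFinset u | ↑m < infTime G S x} + 2 ≤ G.degree u := by
  classical
  obtain ⟨a, b, hab, hua, hub, ha, hb⟩ := exists_neighbors_of_infTime_eq_succ hu
  have hearly : 1 < #{x ∈ G.neighborFinset u | ¬ ↑m < infTime G S x} :=
    Finset.one_lt_card.mpr ⟨a, by simpa using ⟨hua, ha⟩, b, by simpa using ⟨hub, hb.le⟩, hab⟩
  rw [← G.card_neighborFinset_eq_degree, ← Finset.card_filter_add_card_filter_not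
    (s := G.neighborFinset u) (fun x => ↑m < infTime G S x)]
  omega

def IsInfectionChain (G : SimpleGraph V) (S : Set V) (f : ℕ → V) (n : ℕ) : Prop :=
  (∀ k ≤ n, infTime G S (f k) = k) ∧ ∀ k < n, G.Adj (f k) (f (k + 1))

lemma exists_isInfectionChain {u : V} {n : ℕ} (hu : infTime G S u = n) :
    ∃ f, f n = u ∧ IsInfectionChain G S f n := by
  induction n generalizing u with
  | zero => exact ⟨fun _ => u, rfl, fun k hk => by simpa [Nat.le_zero.mp hk] using hu,
      fun k hk => absurd hk (Nat.not_lt_zero k)⟩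
  | succ n ih =>
    obtain ⟨-, b, -, -, hub, -, hb⟩ := exists_neighbors_of_infTime_eq_succ hu
    obtain ⟨f, hfn, htime, hadj⟩ := ih hb
    refine ⟨Function.update f (n + 1) u, by simp, fun k hk => ?_, fun k hk => ?_⟩
    · rcases Nat.lt_or_eq_of_le hk with hk | rfl
      · rw [Function.update_of_ne (by omega)]
        exact htime k (by omega)
      · simpa using hu
    · rcases Nat.lt_or_eq_of_le (Nat.le_of_lt_succ hk) with hk | rfl
      · rw [Function.update_of_ne (by omega), Function.update_of_ne (by omega)]
        exact hadj k hk
      · simpa [Function.update_of_ne, hfn] using hub.symm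

namespace IsInfectionChain

variable {f : ℕ → V} {n : ℕ}

lemma injOn (hf : IsInfectionChain G S f n) : Set.InjOn f (Set.Iic n) := fun a ha b hb h => by
  exact_mod_cast (hf.1 a ha).symm.trans (h ▸ hf.1 b hb)

variable [Fintype V] [DecidableRel G.Adj]

lemma mem_late_neighbors (hf : IsInfectionChain G S f n) {u : V} {b m : ℕ} (hadj : G.Adj u (f b))
    (hb : b ≤ n) (hmb : m < b) : f b ∈ {x ∈ G.neighborFinset u | ↑m < infTime G S x} :=
  Finset.mem_filter.mpr
    ⟨(G.mem_neighborFinset u (f b)).mpr hadj, by rw [hf.1 b hb]; exact_mod_cast hmb⟩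

lemma not_adj (hf : IsInfectionChain G S f n) (hmax : ∀ u, G.degree u ≤ 3) {a b : ℕ}
    (ha : 1 ≤ a) (hab : a + 2 ≤ b) (hb : b ≤ n) : ¬ G.Adj (f a) (f b) := by
  intro hadj
  obtain ⟨m, rfl⟩ : ∃ m, a = m + 1 := ⟨a - 1, by omega⟩
  -- `f (m + 2)` and `f b` would be two late neighbours, leaving room for only one early one.
  have hlate : 1 < #{x ∈ G.neighborFinset (f (m + 1)) | ↑m < infTime G S x} := by
    refine Finset.one_lt_card.mpr ⟨f (m + 1 + 1), ?_, f b, ?_, fun h => ?_⟩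
    · exact hf.mem_late_neighbors (hf.2 (m + 1) (by omega)) (by omega) (by omega)
    · exact hf.mem_late_neighbors hadj hb (by omega)
    · exact absurd (hf.injOn (Set.mem_Iic.mpr (by omega)) hb h) (by omega)
  have := card_neighbors_infTime_gt_add_two_le_degree (hf.1 (m + 1) (by omega))
  have := hmax (f (m + 1))
  omega

lemma adj_iff (hf : IsInfectionChain G S f n) (hmax : ∀ u, G.degree u ≤ 3) {a b : ℕ}
    (ha : 1 ≤ a) (ha' : a ≤ n) (hb : 1 ≤ b) (hb' : b ≤ n) :
    G.Adj (f a) (f b) ↔ a + 1 = b ∨ b + 1 = a := by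
  refine ⟨fun hadj => ?_, ?_⟩
  · rcases lt_trichotomy a b with hlt | rfl | hgt
    · by_contra h
      exact hf.not_adj hmax ha (by omega) hb' hadj
    · exact (G.irrefl hadj).elim
    · by_contra h
      exact hf.not_adj hmax hb (by omega) ha' hadj.symm
  · rintro (rfl | rfl)
    · exact hf.2 a (by omega)
    · exact (hf.2 b (by omega)).symm

lemma degree_eq_three (hf : IsInfectionChain G S f n) (hmax : ∀ u, G.degree u ≤ 3) {a : ℕ}
    (ha : 1 ≤ a) (ha' : a < n) : G.degree (f a) = 3 := by
  obtain ⟨m, rfl⟩ : ∃ m, a = m + 1 := ⟨a - 1, by omega⟩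
  have hlate : 0 < #{x ∈ G.neighborFinset (f (m + 1)) | ↑m < infTime G S x} :=
    Finset.card_pos.mpr ⟨f (m + 1 + 1), hf.mem_late_neighbors (hf.2 (m + 1) ha') ha' (by omega)⟩
  have := card_neighbors_infTime_gt_add_two_le_degree (hf.1 (m + 1) (by omega))
  have := hmax (f (m + 1))
  omega

end IsInfectionChain

end

theorem stmt3 {V : Type} [Fintype V] (G : SimpleGraph V) [DecidableRel G.Adj]
    (hmax : ∀ u, G.degree u ≤ 3) (S : Set V)
    (v : V) (t : ℕ) (ht1 : 1 ≤ t)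
    (hvt : infTime G S v = (t : ℕ∞)) :
    ∃ w : Fin t → V, w ⟨t - 1, by omega⟩ = v ∧
      Function.Injective w ∧
      (∀ i j : Fin t, G.Adj (w i) (w j) ↔ (i.1 + 1 = j.1 ∨ j.1 + 1 = i.1)) ∧
      (∀ i : Fin t, infTime G S (w i) = ((i.1 + 1 : ℕ) : ℕ∞)) ∧
      (∀ i : Fin t, i.1 < t - 1 → G.degree (w i) = 3) := by
  obtain ⟨f, hft, hf⟩ := exists_isInfectionChain hvt
  refine ⟨fun i => f (i.1 + 1), by simpa [Nat.sub_add_cancel ht1] using hft, fun i j h => ?_,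
    fun i j => ?_, fun i => hf.1 _ i.2, fun i hi => hf.degree_eq_three hmax (by omega) (by omega)⟩
  · exact Fin.ext (by simpa using hf.injOn (Set.mem_Iic.mpr i.2) (Set.mem_Iic.mpr j.2) h)
  · rw [hf.adj_iff hmax (by omega) i.2 (by omega) j.2]
    omega
end

section
/- Let G be a graph and u_1, u_2, u_3 vertices forming a triangle in G such that each u_i has exactly one neighbor outside {u_1, u_2, u_3}. Then every percolating set of G under 2-neighbor bootstrap percolation contains at least one of u_1, u_2, u_3. -/
open SimpleGraph

theorem stmt8 {V : Type} (G : SimpleGraph V) (u₁ u₂ u₃ : V)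
    (h12 : G.Adj u₁ u₂) (h13 : G.Adj u₁ u₃) (h23 : G.Adj u₂ u₃)
    (h1 : ∃! x, x ∉ ({u₁, u₂, u₃} : Set V) ∧ G.Adj u₁ x)
    (h2 : ∃! x, x ∉ ({u₁, u₂, u₃} : Set V) ∧ G.Adj u₂ x)
    (h3 : ∃! x, x ∉ ({u₁, u₂, u₃} : Set V) ∧ G.Adj u₃ x)
    (S : Set V) (hperc : Percolates G S) :
    u₁ ∈ S ∨ u₂ ∈ S ∨ u₃ ∈ S := by
  by_contra h
  push_neg at h
  obtain ⟨hS1, hS2, hS3⟩ := h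
  obtain ⟨x₁, ⟨hx1n, hx1a⟩, hx1u⟩ := h1
  obtain ⟨x₂, ⟨hx2n, hx2a⟩, hx2u⟩ := h2
  obtain ⟨x₃, ⟨hx3n, hx3a⟩, hx3u⟩ := h3
  have nb1 : ∀ y, G.Adj u₁ y → y = u₂ ∨ y = u₃ ∨ y = x₁ := by
    intro y hy
    by_cases hmem : y ∈ ({u₁, u₂, u₃} : Set V)
    · rcases hmem with rfl | rfl | rfl
      · exact absurd hy (G.irrefl)
      · exact Or.inl rfl
      · exact Or.inr (Or.inl rfl)
    · exact Or.inr (Or.inr (hx1u y ⟨hmem, hy⟩))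
  have nb2 : ∀ y, G.Adj u₂ y → y = u₁ ∨ y = u₃ ∨ y = x₂ := by
    intro y hy
    by_cases hmem : y ∈ ({u₁, u₂, u₃} : Set V)
    · rcases hmem with rfl | rfl | rfl
      · exact Or.inl rfl
      · exact absurd hy (G.irrefl)
      · exact Or.inr (Or.inl rfl)
    · exact Or.inr (Or.inr (hx2u y ⟨hmem, hy⟩))
  have nb3 : ∀ y, G.Adj u₃ y → y = u₁ ∨ y = u₂ ∨ y = x₃ := by
    intro y hy
    by_cases hmem : y ∈ ({u₁, u₂, u₃} : Set V)
    · rcases hmem with rfl | rfl | rfl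
      · exact Or.inl rfl
      · exact Or.inr (Or.inl rfl)
      · exact absurd hy (G.irrefl)
    · exact Or.inr (Or.inr (hx3u y ⟨hmem, hy⟩))
  have key : ∀ n, u₁ ∉ stage G S n ∧ u₂ ∉ stage G S n ∧ u₃ ∉ stage G S n := by
    intro n
    induction n with
    | zero => exact ⟨hS1, hS2, hS3⟩
    | succ n ih =>
      obtain ⟨ih1, ih2, ih3⟩ := ih
      have step : ∀ (v a b x : V), v ∉ stage G S n →
          (∀ y, G.Adj v y → y = a ∨ y = b ∨ y = x) →
          a ∉ stage G S n → b ∉ stage G S n →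
          v ∉ stage G S (n + 1) := by
        intro v a b x hv hnb ha hb hmem
        rcases hmem with hv' | ⟨u, w, huw, hu, hw, huS, hwS⟩
        · exact hv hv'
        · rcases hnb u hu with rfl | rfl | rfl
          · exact ha huS
          · exact hb huS
          · rcases hnb w hw with rfl | rfl | rfl
            · exact ha hwS
            · exact hb hwS
            · exact huw rfl
      exact ⟨step u₁ u₂ u₃ x₁ ih1 nb1 ih2 ih3,
        step u₂ u₁ u₃ x₂ ih2 nb2 ih1 ih3,
        step u₃ u₁ u₂ x₃ ih3 nb3 ih1 ih2⟩
  obtain ⟨t, ht⟩ := hperc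
  exact (key t).1 (ht ▸ Set.mem_univ u₁)
end

section
/- Let G be a connected graph with maximum degree 3 in which every vertex has degree 3 except exactly one vertex of degree 2, and suppose the longest induced path starting at the degree-2 vertex and otherwise using only degree-3 vertices has ℓ edges, while the longest induced path using only degree-3 vertices has m edges. Then t(G) = max(ℓ + 1, ⌊m/2⌋ + 1). -/
open SimpleGraph

/-!
Let `τ u` be the round in which `u` gets infected from a percolating set. If `τ u ≥ 1`, then `u`
has two neighbours infected before it, so with degrees at most 3 it has at most one neighbour
infected no earlier than itself, and it has degree 3 if it has one. Following neighbours infected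
exactly one round earlier from a vertex of round `K + 1` therefore gives an induced path of
length `K` (a chord would give its earlier-infected end two late neighbours); starting from a
degree-3 vertex of the last round, two such descents glued at the top give an induced path of
degree-3 vertices of length at least `2K`. Conversely, infecting every vertex off a longest path
of either kind, the infection creeps along the path one vertex per round: from the far end to the
degree-2 vertex, or from both ends to the middle.
-/

namespace Bootstrap

open Finset

variable {V : Type} {G : SimpleGraph V} {S : Set V}

lemma stage_mono : Monotone (stage G S) :=
  monotone_nat_of_le_succ fun _ => Set.subset_union_left

variable (G) in
def cubicPathLengths [Fintype V] [DecidableRel G.Adj] : Set ℕ :=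
  {n | ∃ w : Fin (n + 1) → V, IsInducedPath G w ∧ ∀ i, G.degree (w i) = 3}

variable (G) in
def cubicPathLengthsFrom [Fintype V] [DecidableRel G.Adj] (v₀ : V) : Set ℕ :=
  {n | ∃ w : Fin (n + 1) → V, IsInducedPath G w ∧ w 0 = v₀ ∧
    ∀ i : Fin (n + 1), i ≠ 0 → G.degree (w i) = 3}

section TimeFunction

variable (T : V → ℕ)

lemma mem_stage_of_forall_exists_lt
    (hT : ∀ u ∉ S, ∃ a b, a ≠ b ∧ G.Adj u a ∧ G.Adj u b ∧ T a < T u ∧ T b < T u) (u : V) :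
    u ∈ stage G S (T u) := by
  induction h : T u using Nat.strong_induction_on generalizing u with
  | _ k ih =>
  by_cases hu : u ∈ S
  · exact stage_mono (Nat.zero_le k) hu
  obtain ⟨a, b, hab, ha, hb, hTa, hTb⟩ := hT u hu
  obtain ⟨k, rfl⟩ : ∃ k', k = k' + 1 := ⟨k - 1, by omega⟩
  exact Or.inr ⟨a, b, hab, ha, hb, stage_mono (by omega) (ih _ (by omega) a rfl),
    stage_mono (by omega) (ih _ (by omega) b rfl)⟩

lemma stage_subset_of_forall_le_max_succ (hS : ∀ u ∈ S, T u = 0)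
    (hT : ∀ u a b, a ≠ b → G.Adj u a → G.Adj u b → T u ≤ max (T a) (T b) + 1) (k : ℕ) :
    stage G S k ⊆ {u | T u ≤ k} := by
  induction k with
  | zero => exact fun u hu => (hS u hu).le
  | succ k ih =>
    rintro u (hu | ⟨a, b, hab, ha, hb, haS, hbS⟩)
    · exact (ih hu).trans k.le_succ
    · have hTa : T a ≤ k := ih haS
      have hTb : T b ≤ k := ih hbS
      have := hT u a b hab ha hb
      show T u ≤ k + 1
      omega

lemma percTime_eq_of_forall (u₀ : V) (hu₀ : ∀ u, T u ≤ T u₀)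
    (hlow : ∀ u ∉ S, ∃ a b, a ≠ b ∧ G.Adj u a ∧ G.Adj u b ∧ T a < T u ∧ T b < T u)
    (hS : ∀ u ∈ S, T u = 0)
    (hup : ∀ u a b, a ≠ b → G.Adj u a → G.Adj u b → T u ≤ max (T a) (T b) + 1) :
    Percolates G S ∧ percTime G S = T u₀ := by
  have hfull : stage G S (T u₀) = Set.univ := Set.eq_univ_of_forall fun u =>
    stage_mono (hu₀ u) (mem_stage_of_forall_exists_lt T hlow u)
  refine ⟨⟨_, hfull⟩, le_antisymm (Nat.sInf_le hfull) (le_csInf ⟨_, hfull⟩ fun t ht => ?_)⟩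
  exact stage_subset_of_forall_le_max_succ T hS hup t (ht ▸ Set.mem_univ u₀)

end TimeFunction

section PathInfection

variable [Fintype V] [DecidableRel G.Adj] {n : ℕ} {w : Fin (n + 1) → V}

open Classical in
variable (G) in
noncomputable def offPathNeighbors (w : Fin (n + 1) → V) (j : Fin (n + 1)) : Finset V :=
  (G.neighborFinset (w j)).filter (· ∉ Set.range w)

lemma mem_offPathNeighbors {j : Fin (n + 1)} {x : V} :
    x ∈ offPathNeighbors G w j ↔ G.Adj (w j) x ∧ x ∉ Set.range w := by
  simp [offPathNeighbors]

omit [Fintype V] [DecidableRel G.Adj] in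
lemma card_filter_consecutive (j : Fin (n + 1)) :
    #(univ.filter fun i : Fin (n + 1) => j.1 + 1 = i.1 ∨ i.1 + 1 = j.1) =
      (if 0 < j.1 then 1 else 0) + (if j.1 < n then 1 else 0) := by
  rw [filter_or, card_union_of_disjoint (disjoint_filter.2 fun i _ h1 h2 => by omega), add_comm]
  congr 1
  · split_ifs with h
    · exact card_eq_one.2 ⟨⟨j - 1, by omega⟩, by ext i; simp [Fin.ext_iff]; omega⟩
    · exact card_eq_zero.2 (filter_eq_empty_iff.2 fun i _ => by omega)
  · split_ifs with h
    · exact card_eq_one.2 ⟨⟨j + 1, by omega⟩, by ext i; simp [Fin.ext_iff]; omega⟩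
    · exact card_eq_zero.2 (filter_eq_empty_iff.2 fun i _ => by omega)

lemma card_offPathNeighbors_add (hw : IsInducedPath G w) (j : Fin (n + 1)) :
    #(offPathNeighbors G w j) + ((if 0 < j.1 then 1 else 0) + (if j.1 < n then 1 else 0)) =
      G.degree (w j) := by
  classical
  rw [← card_filter_consecutive, ← card_neighborFinset_eq_degree,
    ← card_filter_add_card_filter_not (s := G.neighborFinset (w j)) (· ∉ Set.range w),
    ← card_image_of_injective _ hw.1, offPathNeighbors]
  congr 2
  ext x
  simp only [mem_filter, mem_neighborFinset, Set.mem_range, not_not, mem_image, mem_univ,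
    true_and]
  constructor
  · rintro ⟨i, hi, rfl⟩
    exact ⟨(hw.2 j i).2 hi, i, rfl⟩
  · rintro ⟨hadj, i, rfl⟩
    exact ⟨i, (hw.2 j i).1 hadj, rfl⟩

variable (T : Fin (n + 1) → ℕ)

lemma exists_adj_extend_lt (hw : IsInducedPath G w) (hpos : ∀ j, 1 ≤ T j) (j : Fin (n + 1))
    (hj : 2 ≤ #(offPathNeighbors G w j) ∨ 1 ≤ #(offPathNeighbors G w j) ∧
      ∃ i : Fin (n + 1), (j.1 + 1 = i.1 ∨ i.1 + 1 = j.1) ∧ T i < T j) :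
    ∃ a b, a ≠ b ∧ G.Adj (w j) a ∧ G.Adj (w j) b ∧
      Function.extend w T 0 a < T j ∧ Function.extend w T 0 b < T j := by
  have hoff : ∀ a ∈ offPathNeighbors G w j, Function.extend w T 0 a < T j := fun a ha =>
    (Function.extend_apply' _ _ _ fun ⟨i, hi⟩ => (mem_offPathNeighbors.1 ha).2 ⟨i, hi⟩).trans_lt
      (hpos j)
  rcases hj with h2 | ⟨h1, i, hij, hTi⟩
  · obtain ⟨a, ha, b, hb, hab⟩ := one_lt_card.1 h2
    exact ⟨a, b, hab, (mem_offPathNeighbors.1 ha).1, (mem_offPathNeighbors.1 hb).1, hoff a ha,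
      hoff b hb⟩
  · obtain ⟨a, ha⟩ := card_pos.1 h1
    refine ⟨w i, a, fun h => (mem_offPathNeighbors.1 ha).2 ⟨i, h⟩, (hw.2 j i).2 hij,
      (mem_offPathNeighbors.1 ha).1, ?_, hoff a ha⟩
    rwa [hw.1.extend_apply]

lemma extend_le_max_succ (hw : IsInducedPath G w)
    (hlip : ∀ i j : Fin (n + 1), i.1 + 1 = j.1 ∨ j.1 + 1 = i.1 → T i ≤ T j + 1)
    (hup : ∀ j, 2 ≤ #(offPathNeighbors G w j) → T j ≤ 1) {u a b : V} (hab : a ≠ b)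
    (ha : G.Adj u a) (hb : G.Adj u b) :
    Function.extend w T 0 u ≤ max (Function.extend w T 0 a) (Function.extend w T 0 b) + 1 := by
  obtain ⟨j, rfl⟩ | hu := em (u ∈ Set.range w)
  swap
  · rw [Function.extend_apply' _ _ _ fun ⟨i, hi⟩ => hu ⟨i, hi⟩]
    exact Nat.zero_le _
  rw [hw.1.extend_apply]
  have hpath : ∀ c, G.Adj (w j) c → c ∈ Set.range w → T j ≤ Function.extend w T 0 c + 1 := by
    rintro c hc ⟨i, rfl⟩
    rw [hw.1.extend_apply]
    exact hlip j i ((hw.2 j i).1 hc)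
  by_cases haw : a ∈ Set.range w
  · exact (hpath a ha haw).trans (by omega)
  by_cases hbw : b ∈ Set.range w
  · exact (hpath b hb hbw).trans (by omega)
  have := hup j (one_lt_card.2 ⟨a, mem_offPathNeighbors.2 ⟨ha, haw⟩, b,
    mem_offPathNeighbors.2 ⟨hb, hbw⟩, hab⟩)
  omega

lemma percTime_compl_range (hw : IsInducedPath G w) (j₀ : Fin (n + 1)) (hj₀ : ∀ j, T j ≤ T j₀)
    (hpos : ∀ j, 1 ≤ T j)
    (hlip : ∀ i j : Fin (n + 1), i.1 + 1 = j.1 ∨ j.1 + 1 = i.1 → T i ≤ T j + 1)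
    (hlow : ∀ j, 2 ≤ #(offPathNeighbors G w j) ∨ 1 ≤ #(offPathNeighbors G w j) ∧
      ∃ i : Fin (n + 1), (j.1 + 1 = i.1 ∨ i.1 + 1 = j.1) ∧ T i < T j)
    (hup : ∀ j, 2 ≤ #(offPathNeighbors G w j) → T j ≤ 1) :
    Percolates G (Set.range w)ᶜ ∧ percTime G (Set.range w)ᶜ = T j₀ := by
  have hoff : ∀ u ∉ Set.range w, Function.extend w T 0 u = 0 := fun u hu =>
    Function.extend_apply' _ _ _ fun ⟨i, hi⟩ => hu ⟨i, hi⟩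
  rw [← hw.1.extend_apply T 0 j₀]
  refine percTime_eq_of_forall _ _ (fun u => ?_) (fun u hu => ?_) hoff
    (fun u a b hab ha hb => extend_le_max_succ T hw hlip hup hab ha hb)
  · obtain ⟨j, rfl⟩ | hu := em (u ∈ Set.range w)
    · rw [hw.1.extend_apply, hw.1.extend_apply]
      exact hj₀ j
    · rw [hoff u hu]
      exact Nat.zero_le _
  · obtain ⟨j, rfl⟩ : u ∈ Set.range w := not_not.1 hu
    rw [hw.1.extend_apply]
    exact exists_adj_extend_lt T hw hpos j (hlow j)

lemma exists_percTime_eq_of_mem_cubicPathLengthsFrom {v₀ : V} (hv₀ : G.degree v₀ = 2) {ℓ : ℕ}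
    (hℓ : ℓ ∈ cubicPathLengthsFrom G v₀) :
    ∃ S : Set V, Percolates G S ∧ percTime G S = ℓ + 1 := by
  obtain ⟨w, hw, hw0, hdeg⟩ := hℓ
  have hoff : ∀ j : Fin (ℓ + 1), #(offPathNeighbors G w j) +
      ((if 0 < j.1 then 1 else 0) + (if j.1 < ℓ then 1 else 0)) = if j.1 = 0 then 2 else 3 := by
    intro j
    rw [card_offPathNeighbors_add hw j]
    split_ifs with h
    · rwa [show j = 0 from Fin.ext h, hw0]
    · exact hdeg j fun h' => h (h' ▸ rfl)
  refine ⟨_, percTime_compl_range (fun j => ℓ + 1 - j) hw 0 (fun j => by simp) (fun j => by omega)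
    (fun i j h => by omega) (fun j => ?_) (fun j h => ?_)⟩
  · have := hoff j
    by_cases hjℓ : j.1 = ℓ
    · exact .inl (by split_ifs at this <;> omega)
    · refine .inr ⟨by split_ifs at this <;> omega, ⟨j + 1, by omega⟩, .inl rfl, by simp; omega⟩
  · have := hoff j
    split_ifs at this <;> simp <;> omega

lemma exists_percTime_eq_of_mem_cubicPathLengths {m : ℕ} (hm : m ∈ cubicPathLengths G) :
    ∃ S : Set V, Percolates G S ∧ percTime G S = m / 2 + 1 := by
  obtain ⟨w, hw, hdeg⟩ := hm
  have hoff : ∀ j : Fin (m + 1), #(offPathNeighbors G w j) +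
      ((if 0 < j.1 then 1 else 0) + (if j.1 < m then 1 else 0)) = 3 :=
    fun j => (card_offPathNeighbors_add hw j).trans (hdeg j)
  set T : Fin (m + 1) → ℕ := fun j => min (j + 1) (m + 1 - j)
  have hlow : ∀ j, 2 ≤ #(offPathNeighbors G w j) ∨ 1 ≤ #(offPathNeighbors G w j) ∧
      ∃ i : Fin (m + 1), (j.1 + 1 = i.1 ∨ i.1 + 1 = j.1) ∧ T i < T j := by
    intro j
    have := hoff j
    by_cases hend : j.1 = 0 ∨ j.1 = m
    · exact .inl (by split_ifs at this <;> omega)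
    refine .inr ⟨by split_ifs at this <;> omega, ?_⟩
    by_cases hleft : j.1 + 1 ≤ m + 1 - j.1
    · exact ⟨⟨j - 1, by omega⟩, .inr (by dsimp only; omega), by dsimp only [T]; omega⟩
    · exact ⟨⟨j + 1, by omega⟩, .inl rfl, by dsimp only [T]; omega⟩
  have hup : ∀ j, 2 ≤ #(offPathNeighbors G w j) → T j ≤ 1 := by
    intro j h
    have := hoff j
    split_ifs at this <;> dsimp only [T] <;> omega
  obtain ⟨hperc, htime⟩ := percTime_compl_range T hw ⟨m / 2, by omega⟩
    (fun j => by dsimp only [T]; omega) (fun j => by dsimp only [T]; omega)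
    (fun i j h => by dsimp only [T]; omega) hlow hup
  exact ⟨_, hperc, htime.trans (by dsimp only [T]; omega)⟩

end PathInfection


-- An `ℕ`-valued `infTime`: it is only used for percolating `S`, where it is finite.
variable (G S) in
noncomputable def infectionRound (u : V) : ℕ := sInf {n | u ∈ stage G S n}

local notation "τ" => infectionRound G S

variable (G S) in
noncomputable def stepDown (u : V) : V :=
  @Classical.epsilon V ⟨u⟩ fun a => G.Adj u a ∧ τ a + 1 = τ u

variable (G S) in
noncomputable def descent (u : V) (i : ℕ) : V := (stepDown G S)^[i] u

lemma descent_succ (u : V) (i : ℕ) : descent G S u (i + 1) = stepDown G S (descent G S u i) :=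
  Function.iterate_succ_apply' ..

lemma descent_add (u : V) (i j : ℕ) :
    descent G S u (i + j) = descent G S (descent G S u j) i :=
  Function.iterate_add_apply ..

variable (G S) in
noncomputable def gluedPath (x y : V) (i : ℕ) : V :=
  if i < τ x then descent G S x (τ x - 1 - i) else descent G S y (i - τ x)

section Round

variable (hP : Percolates G S)
include hP

lemma mem_stage_iff {u : V} {r : ℕ} : u ∈ stage G S r ↔ τ u ≤ r := by
  obtain ⟨t, ht⟩ := hP
  have hne : {n | u ∈ stage G S n}.Nonempty := ⟨t, by simp [ht]⟩
  exact ⟨fun h => Nat.sInf_le h, fun h => stage_mono h (Nat.sInf_mem hne)⟩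

lemma stage_percTime : stage G S (percTime G S) = Set.univ :=
  Nat.sInf_mem hP

lemma infectionRound_le_percTime (u : V) : τ u ≤ percTime G S :=
  (mem_stage_iff hP).1 (by rw [stage_percTime hP]; trivial)

lemma exists_infectionRound_eq_percTime (h : percTime G S ≠ 0) : ∃ v, τ v = percTime G S := by
  by_contra! hlt
  have hfull : stage G S (percTime G S - 1) = Set.univ := Set.eq_univ_of_forall fun v =>
    (mem_stage_iff hP).2 (by have := infectionRound_le_percTime hP v; have := hlt v; omega)
  have : percTime G S ≤ percTime G S - 1 := Nat.sInf_le hfull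
  omega

lemma exists_infectionRound_le_of_eq_succ {u : V} {r : ℕ} (hu : τ u = r + 1) :
    ∃ a b, a ≠ b ∧ G.Adj u a ∧ G.Adj u b ∧ τ a ≤ r ∧ τ b ≤ r := by
  rcases (mem_stage_iff hP).2 hu.le with h | ⟨a, b, hab, ha, hb, haS, hbS⟩
  · exact absurd ((mem_stage_iff hP).1 h) (by omega)
  · exact ⟨a, b, hab, ha, hb, (mem_stage_iff hP).1 haS, (mem_stage_iff hP).1 hbS⟩

lemma infectionRound_le_succ {u a b : V} {r : ℕ} (hab : a ≠ b) (ha : G.Adj u a)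
    (hb : G.Adj u b) (hra : τ a ≤ r) (hrb : τ b ≤ r) : τ u ≤ r + 1 :=
  (mem_stage_iff hP).1 <|
    Or.inr ⟨a, b, hab, ha, hb, (mem_stage_iff hP).2 hra, (mem_stage_iff hP).2 hrb⟩

lemma exists_adj_infectionRound_eq {u : V} {r : ℕ} (hu : τ u = r + 1) :
    ∃ a, G.Adj u a ∧ τ a = r := by
  obtain ⟨a, b, hab, ha, hb, hra, hrb⟩ := exists_infectionRound_le_of_eq_succ hP hu
  by_contra! hne
  have := hne a ha
  have := hne b hb
  have := infectionRound_le_succ hP (r := r - 1) hab ha hb (by omega) (by omega)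
  omega

lemma two_add_card_late_le_degree [Fintype V] [DecidableRel G.Adj] {u : V} (hu : 1 ≤ τ u) :
    2 + #((G.neighborFinset u).filter (τ u ≤ τ ·)) ≤ G.degree u := by
  obtain ⟨c, d, hcd, hc, hd, hrc, hrd⟩ :=
    exists_infectionRound_le_of_eq_succ hP (u := u) (r := τ u - 1) (by omega)
  have hearly : 1 < #((G.neighborFinset u).filter (¬ τ u ≤ τ ·)) :=
    one_lt_card.2 ⟨c, mem_filter.2 ⟨(mem_neighborFinset ..).2 hc, by omega⟩,
      d, mem_filter.2 ⟨(mem_neighborFinset ..).2 hd, by omega⟩, hcd⟩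
  have := card_filter_add_card_filter_not (s := G.neighborFinset u) (τ u ≤ τ ·)
  rw [card_neighborFinset_eq_degree] at this
  omega

lemma stepDown_spec {u : V} {r : ℕ} (hu : τ u = r + 1) :
    G.Adj u (stepDown G S u) ∧ τ (stepDown G S u) = r := by
  obtain ⟨a, ha, hra⟩ := exists_adj_infectionRound_eq hP hu
  have : G.Adj u (stepDown G S u) ∧ τ (stepDown G S u) + 1 = τ u :=
    Classical.epsilon_spec (p := fun a => G.Adj u a ∧ τ a + 1 = τ u) ⟨a, ha, by omega⟩
  exact ⟨this.1, by omega⟩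

lemma infectionRound_descent (u : V) {i : ℕ} (hi : i ≤ τ u) :
    τ (descent G S u i) = τ u - i := by
  induction i with
  | zero => rfl
  | succ i ih =>
    rw [descent_succ, (stepDown_spec hP (r := τ u - i - 1) (by rw [ih (by omega)]; omega)).2]
    omega

lemma adj_descent (u : V) {i : ℕ} (hi : i < τ u) :
    G.Adj (descent G S u i) (descent G S u (i + 1)) := by
  rw [descent_succ]
  exact (stepDown_spec hP (r := τ u - i - 1) (by rw [infectionRound_descent hP u hi.le]; omega)).1

lemma infectionRound_gluedPath (x y : V) {i : ℕ} (hi : i < τ x + τ y) :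
    τ (gluedPath G S x y i) = if i < τ x then i + 1 else τ x + τ y - i := by
  unfold gluedPath
  split_ifs
  · rw [infectionRound_descent hP x (by omega)]; omega
  · rw [infectionRound_descent hP y (by omega)]; omega

lemma adj_gluedPath {x y : V} (hxy : G.Adj x y) {i : ℕ} (hi : i + 1 < τ x + τ y) :
    G.Adj (gluedPath G S x y i) (gluedPath G S x y (i + 1)) := by
  unfold gluedPath
  rcases lt_trichotomy (i + 1) (τ x) with h | h | h
  · rw [if_pos h, if_pos (by omega), adj_comm, show τ x - 1 - i = τ x - 1 - (i + 1) + 1 by omega]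
    exact adj_descent hP x (by omega)
  · rwa [if_pos (by omega), if_neg (by omega), show τ x - 1 - i = 0 by omega,
      show i + 1 - τ x = 0 by omega]
  · rw [if_neg (by omega), if_neg (by omega), show i + 1 - τ x = i - τ x + 1 by omega]
    exact adj_descent hP y (by omega)

variable [Fintype V] [DecidableRel G.Adj] (hmax : ∀ v, G.degree v ≤ 3)
include hmax

lemma eq_of_adj_of_infectionRound_le {u a b : V} (hu : 1 ≤ τ u) (ha : G.Adj u a)
    (hb : G.Adj u b) (hra : τ u ≤ τ a) (hrb : τ u ≤ τ b) : a = b := by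
  by_contra hab
  have : 1 < #((G.neighborFinset u).filter (τ u ≤ τ ·)) :=
    one_lt_card.2 ⟨a, mem_filter.2 ⟨(mem_neighborFinset ..).2 ha, hra⟩,
      b, mem_filter.2 ⟨(mem_neighborFinset ..).2 hb, hrb⟩, hab⟩
  have := two_add_card_late_le_degree hP hu
  have := hmax u
  omega

lemma degree_eq_three_of_adj_of_infectionRound_le {u a : V} (hu : 1 ≤ τ u) (ha : G.Adj u a)
    (hra : τ u ≤ τ a) : G.degree u = 3 := by
  have : 0 < #((G.neighborFinset u).filter (τ u ≤ τ ·)) :=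
    card_pos.2 ⟨a, mem_filter.2 ⟨(mem_neighborFinset ..).2 ha, hra⟩⟩
  have := two_add_card_late_le_degree hP hu
  have := hmax u
  omega

lemma descent_ne_descent {x y : V} (hxy : x ≠ y) (h : τ x = τ y) {i : ℕ} (hi : i < τ x) :
    descent G S x i ≠ descent G S y i := by
  induction i with
  | zero => exact hxy
  | succ i ih =>
    intro heq
    have := infectionRound_descent hP x (i := i) (by omega)
    have := infectionRound_descent hP y (i := i) (by omega)
    have := infectionRound_descent hP x hi.le
    refine ih (by omega) (eq_of_adj_of_infectionRound_le hP hmax (u := descent G S x (i + 1))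
      (by omega) (adj_descent hP x (by omega)).symm ?_ (by omega) (by omega))
    rw [heq]
    exact (adj_descent hP y (by omega)).symm

lemma isInducedPath_of_late_neighbor (p : ℕ → V) (n : ℕ)
    (hadj : ∀ i < n, G.Adj (p i) (p (i + 1)))
    (hinj : ∀ i ≤ n, ∀ j ≤ n, p i = p j → i = j) (hpos : ∀ i ≤ n, 1 ≤ τ (p i))
    (hlate : ∀ i ≤ n, (∃ j ≤ n, (i + 1 = j ∨ j + 1 = i) ∧ τ (p i) ≤ τ (p j)) ∨
      ∀ j ≤ n, j ≠ i → τ (p j) < τ (p i)) :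
    IsInducedPath G (fun i : Fin (n + 1) => p i) := by
  have hcons : ∀ i ≤ n, ∀ j ≤ n, i + 1 = j ∨ j + 1 = i → G.Adj (p i) (p j) := by
    rintro i hi j hj (rfl | rfl)
    · exact hadj i (by omega)
    · exact (hadj j (by omega)).symm
  -- a chord would give its earlier-infected end two late neighbours
  have hchord : ∀ i ≤ n, ∀ j ≤ n, G.Adj (p i) (p j) → τ (p i) ≤ τ (p j) →
      i + 1 = j ∨ j + 1 = i := by
    intro i hi j hj hij hle
    rcases hlate i hi with ⟨k, hk, hik, hlek⟩ | htop
    · by_contra hcon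
      have := hinj k hk j hj (eq_of_adj_of_infectionRound_le hP hmax (hpos i hi)
        (hcons i hi k hk hik) hij hlek hle)
      omega
    · have := htop j hj (by rintro rfl; exact hij.ne rfl)
      omega
  refine ⟨fun i j h => Fin.ext (hinj i i.is_le j j.is_le h), fun i j => ⟨fun h => ?_,
    hcons i i.is_le j j.is_le⟩⟩
  rcases le_total (τ (p i)) (τ (p j)) with hle | hle
  · exact hchord i i.is_le j j.is_le h hle
  · exact (hchord j j.is_le i i.is_le h.symm hle).symm

lemma mem_cubicPathLengthsFrom_of_infectionRound_eq {u : V} {K : ℕ} (hu : τ u = K + 1) :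
    K ∈ cubicPathLengthsFrom G u := by
  have htime : ∀ i ≤ K, τ (descent G S u i) = K + 1 - i := fun i hi => by
    rw [infectionRound_descent hP u (by omega), hu]
  have hadj : ∀ i < K, G.Adj (descent G S u i) (descent G S u (i + 1)) :=
    fun i hi => adj_descent hP u (by omega)
  refine ⟨_, isInducedPath_of_late_neighbor hP hmax _ K hadj (fun i hi j hj h => ?_)
    (fun i hi => by rw [htime i hi]; omega) (fun i hi => ?_), rfl, fun i hi => ?_⟩
  · have := htime i hi; have := htime j hj; rw [h] at *; omega
  · rcases Nat.eq_zero_or_pos i with rfl | hi0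
    · exact .inr fun j hj hj0 => by rw [htime j hj, htime 0 hi]; omega
    · exact .inl ⟨i - 1, by omega, by omega, by rw [htime i hi, htime (i - 1) (by omega)]; omega⟩
  · have hi0 : i.1 ≠ 0 := fun h => hi (Fin.ext h)
    have := hadj (i.1 - 1) (by omega)
    rw [Nat.sub_add_cancel (by omega)] at this
    exact degree_eq_three_of_adj_of_infectionRound_le hP hmax (by rw [htime i i.is_le]; omega)
      this.symm (by rw [htime i i.is_le, htime _ (by omega)]; omega)

lemma gluedPath_injOn {x y : V} (hle : τ x ≤ τ y) (hle' : τ y ≤ τ x + 1)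
    (hne : x ≠ descent G S y (τ y - τ x)) {i j : ℕ} (hi : i < τ x + τ y) (hj : j < τ x + τ y)
    (h : gluedPath G S x y i = gluedPath G S x y j) : i = j := by
  have hij : (if i < τ x then i + 1 else τ x + τ y - i) =
      if j < τ x then j + 1 else τ x + τ y - j := by
    rw [← infectionRound_gluedPath hP x y hi, h, infectionRound_gluedPath hP x y hj]
  have hcross : ∀ i j, i < τ x → τ x ≤ j → i + 1 = τ x + τ y - j →
      gluedPath G S x y i ≠ gluedPath G S x y j := by
    intro i j hi hj hij
    rw [gluedPath, gluedPath, if_pos hi, if_neg (by omega),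
      show j - τ x = τ x - 1 - i + (τ y - τ x) by omega, descent_add]
    refine descent_ne_descent hP hmax hne ?_ (by omega)
    rw [infectionRound_descent hP y (by omega)]
    omega
  split_ifs at hij with hiK hjK hjK
  · omega
  · exact absurd h (hcross i j hiK (by omega) hij)
  · exact absurd h.symm (hcross j i hjK (by omega) hij.symm)
  · omega

lemma mem_cubicPathLengths_of_adj {x y : V} (hxy : G.Adj x y) (hx : 1 ≤ τ x)
    (hle : τ x ≤ τ y) (hle' : τ y ≤ τ x + 1) (hne : x ≠ descent G S y (τ y - τ x))
    (hy : G.degree y = 3) : τ x + τ y - 1 ∈ cubicPathLengths G := by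
  set p := gluedPath G S x y
  have htime : ∀ i ≤ τ x + τ y - 1, τ (p i) = if i < τ x then i + 1 else τ x + τ y - i :=
    fun i hi => infectionRound_gluedPath hP x y (by omega)
  have hlate : ∀ i ≤ τ x + τ y - 1,
      (∃ j ≤ τ x + τ y - 1, (i + 1 = j ∨ j + 1 = i) ∧ τ (p i) ≤ τ (p j)) ∨
        ∀ j ≤ τ x + τ y - 1, j ≠ i → τ (p j) < τ (p i) := by
    intro i hi
    by_cases hup : i < τ x
    · exact .inl ⟨i + 1, by omega, .inl rfl, by
        rw [htime i hi, htime (i + 1) (by omega)]; split_ifs <;> omega⟩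
    by_cases htop : i = τ x ∧ τ y = τ x + 1
    · exact .inr fun j hj hji => by rw [htime j hj, htime i hi]; split_ifs <;> omega
    · exact .inl ⟨i - 1, by omega, .inr (by omega), by
        rw [htime i hi, htime (i - 1) (by omega)]; split_ifs <;> omega⟩
  refine ⟨_, isInducedPath_of_late_neighbor hP hmax p _
    (fun i hi => adj_gluedPath hP hxy (by omega))
    (fun i hi j hj => gluedPath_injOn hP hmax hle hle' hne (by omega) (by omega))
    (fun i hi => by rw [htime i hi]; split_ifs <;> omega) hlate, fun i => ?_⟩
  rcases hlate i i.is_le with ⟨j, hj, hij, hle⟩ | htop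
  · refine degree_eq_three_of_adj_of_infectionRound_le hP hmax
      (by rw [htime i i.is_le]; split_ifs <;> omega) ?_ hle
    rcases hij with rfl | hij
    · exact adj_gluedPath hP hxy (by omega)
    · rw [← hij]
      exact (adj_gluedPath hP hxy (by omega)).symm
  · have hiK : i.1 = τ x := by
      by_contra hiK
      have := htop (τ x) (by omega) (Ne.symm hiK)
      rw [htime _ (by omega), htime i i.is_le] at this
      split_ifs at this <;> omega
    have hpy : p i = y := by simp only [p, gluedPath, hiK, lt_irrefl, if_false, Nat.sub_self]; rfl
    show G.degree (p i) = 3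
    rwa [hpy]

lemma exists_mem_cubicPathLengths_of_last {v : V} {K : ℕ} (hK : 1 ≤ K) (hv : τ v = K + 1)
    (hdeg : G.degree v = 3) (hlast : ∀ u, τ u ≤ K + 1) :
    ∃ n ∈ cubicPathLengths G, 2 * K ≤ n := by
  classical
  have hdown := stepDown_spec hP hv
  -- `v` has at most one neighbour infected before round `K`
  obtain ⟨a, ha, hKa⟩ : ∃ a ∈ (G.neighborFinset v).erase (stepDown G S v), K ≤ τ a := by
    by_contra! hearly
    have : 1 < #((G.neighborFinset v).erase (stepDown G S v)) := by
      rw [card_erase_of_mem ((mem_neighborFinset ..).2 hdown.1), card_neighborFinset_eq_degree,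
        hdeg]
      norm_num
    obtain ⟨b, hb, c, hc, hbc⟩ := one_lt_card.1 this
    have := hearly b hb
    have := hearly c hc
    have := infectionRound_le_succ hP (r := K - 1) hbc
      ((mem_neighborFinset ..).1 (mem_of_mem_erase hb))
      ((mem_neighborFinset ..).1 (mem_of_mem_erase hc)) (by omega) (by omega)
    omega
  have hva : G.Adj v a := (mem_neighborFinset ..).1 (mem_of_mem_erase ha)
  rcases (hlast a).lt_or_eq with hlt | heq
  · refine ⟨_, mem_cubicPathLengths_of_adj hP hmax hva.symm (by omega) (by omega) (by omega)
      ?_ hdeg, by omega⟩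
    rw [hv, show K + 1 - τ a = 1 by omega]
    exact ne_of_mem_erase ha
  · refine ⟨_, mem_cubicPathLengths_of_adj hP hmax hva (by omega) (by omega) (by omega)
      (by rw [show τ a - τ v = 0 by omega]; exact hva.ne) ?_, by omega⟩
    exact degree_eq_three_of_adj_of_infectionRound_le hP hmax (by omega) hva.symm (by omega)

lemma percTime_le {v₀ : V} (hrest : ∀ v, v ≠ v₀ → G.degree v = 3) {ℓ m : ℕ}
    (hℓ : ℓ ∈ upperBounds (cubicPathLengthsFrom G v₀))
    (hm : m ∈ upperBounds (cubicPathLengths G)) :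
    percTime G S ≤ max (ℓ + 1) (m / 2 + 1) := by
  obtain h | ⟨K, hK, hT⟩ : percTime G S ≤ 1 ∨ ∃ K, 1 ≤ K ∧ percTime G S = K + 1 :=
    (le_or_gt _ 1).imp id fun h => ⟨_, by omega, (Nat.sub_add_cancel h.le).symm⟩
  · omega
  obtain ⟨v, hv⟩ := exists_infectionRound_eq_percTime hP (by omega)
  have hlast : ∀ u, τ u ≤ K + 1 := fun u => hT ▸ infectionRound_le_percTime hP u
  rw [hT] at hv ⊢
  by_cases hv₀ : v = v₀
  · have := hℓ (hv₀ ▸ mem_cubicPathLengthsFrom_of_infectionRound_eq hP hmax hv)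
    omega
  · obtain ⟨n, hn, hKn⟩ := exists_mem_cubicPathLengths_of_last hP hmax hK hv (hrest v hv₀) hlast
    have := hm hn
    omega

end Round

end Bootstrap

theorem stmt15_general {V : Type} [Fintype V] (G : SimpleGraph V) [DecidableRel G.Adj]
    (hmax : ∀ v, G.degree v ≤ 3)
    (v₀ : V) (hv₀ : G.degree v₀ = 2) (hrest : ∀ v, v ≠ v₀ → G.degree v = 3)
    (ℓ m : ℕ)
    (hℓ : IsGreatest {n | ∃ w : Fin (n + 1) → V, IsInducedPath G w ∧ w 0 = v₀ ∧
      ∀ i : Fin (n + 1), i ≠ 0 → G.degree (w i) = 3} ℓ)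
    (hm : IsGreatest {n | ∃ w : Fin (n + 1) → V, IsInducedPath G w ∧
      ∀ i, G.degree (w i) = 3} m) :
    maxTime G = max (ℓ + 1) (m / 2 + 1) := by
  refine IsGreatest.csSup_eq ⟨?_, ?_⟩
  · rcases max_choice (ℓ + 1) (m / 2 + 1) with h | h <;> rw [h]
    · exact Bootstrap.exists_percTime_eq_of_mem_cubicPathLengthsFrom hv₀ hℓ.1
    · exact Bootstrap.exists_percTime_eq_of_mem_cubicPathLengths hm.1
  · rintro _ ⟨S, hS, rfl⟩
    exact Bootstrap.percTime_le hS hmax hrest hℓ.2 hm.2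

theorem stmt15 {V : Type} [Fintype V] [DecidableEq V] (G : SimpleGraph V) [DecidableRel G.Adj]
    (hconn : G.Connected) (hmax : ∀ v, G.degree v ≤ 3)
    (v₀ : V) (hv₀ : G.degree v₀ = 2) (hrest : ∀ v, v ≠ v₀ → G.degree v = 3)
    (ℓ m : ℕ)
    (hℓ : IsGreatest {n | ∃ w : Fin (n + 1) → V, IsInducedPath G w ∧ w 0 = v₀ ∧
      ∀ i : Fin (n + 1), i ≠ 0 → G.degree (w i) = 3} ℓ)
    (hm : IsGreatest {n | ∃ w : Fin (n + 1) → V, IsInducedPath G w ∧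
      ∀ i, G.degree (w i) = 3} m) :
    maxTime G = max (ℓ + 1) (m / 2 + 1) :=
  stmt15_general G hmax v₀ hv₀ hrest ℓ m hℓ hm
end
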